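/- arXiv:2005.13703 — 6 statements merged into one kernel-verified Lean document; each statement's English description precedes it below -/
import Mathlib

section
/- For any finite simple graph G, the second Zagreb index satisfies s(G) = γ₃(G) + 2·γ₂(G) + γ₁(G), where γ_t(G) denotes the number of trails with t edges in G (each trail and its reverse counted once, and trails of length 3 may be closed). -/
open SimpleGraph Finset

variable {V : Type*}

/-- The `m`-metric (first Zagreb index) of a graph: the sum of the squares of the degrees. -/
noncomputable def mMetric [Fintype V] (G : SimpleGraph V) : ℕ :=
  letI := Classical.decRel G.Adj
  ∑ v : V, (G.degree v) ^ 2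

/-- The `s`-metric (second Zagreb index) of a graph: the sum over all edges of the product of
the degrees of the two endpoints. -/
noncomputable def sMetric [Fintype V] (G : SimpleGraph V) : ℕ :=
  letI := Classical.decRel G.Adj
  ∑ e ∈ G.edgeFinset,
    Sym2.lift ⟨fun u v => G.degree u * G.degree v, fun _ _ => Nat.mul_comm _ _⟩ e

/-- The first SF-dimension: the maximum of the `m`-metric over all spanning trees. -/
noncomputable def tau1 [Fintype V] (G : SimpleGraph V) : ℕ :=
  sSup {k | ∃ T : SimpleGraph V, T ≤ G ∧ T.IsTree ∧ mMetric T = k}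

/-- The second SF-dimension: the maximum of the `s`-metric over all spanning trees. -/
noncomputable def tau2 [Fintype V] (G : SimpleGraph V) : ℕ :=
  sSup {k | ∃ T : SimpleGraph V, T ≤ G ∧ T.IsTree ∧ sMetric T = k}

/-- Number of vertices of a given degree. -/
noncomputable def degCount [Fintype V] (G : SimpleGraph V) (k : ℕ) : ℕ :=
  letI := Classical.decRel G.Adj
  letI := Classical.decEq V
  (Finset.univ.filter fun v => G.degree v = k).card

/-- Number of leaves of a graph. -/
noncomputable def leafCount [Fintype V] (G : SimpleGraph V) : ℕ := degCount G 1

/-- The bundled type of trails of length `t` in `G` (with endpoints quantified over). -/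
def TrailBundle (G : SimpleGraph V) (t : ℕ) : Type _ :=
  {p : (u : V) × (v : V) × G.Walk u v // p.2.2.IsTrail ∧ p.2.2.length = t}

/-- The reverse of a bundled trail. -/
def TrailBundle.rev {G : SimpleGraph V} {t : ℕ} (p : TrailBundle G t) : TrailBundle G t :=
  ⟨⟨p.1.2.1, p.1.1, p.1.2.2.reverse⟩, p.2.1.reverse _ , by simp [p.2.2]⟩

/-- `gamma G t` is the number of trails with `t` edges in `G`, where a trail and its
reverse are counted once (we count equivalence classes of trails under reversal). -/
noncomputable def gamma (G : SimpleGraph V) (t : ℕ) : ℕ :=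
  Nat.card (Quot fun p q : TrailBundle G t => q = p.rev)

/-!
Count the walks `x - u - v - y` of length 3. Choosing the middle dart `(u, v)` and then neighbours
`x` of `u` and `y` of `v` shows there are `∑ deg u * deg v` over all darts, i.e. `2 s(G)`, of them.
Such a walk is a trail unless `x = v` or `u = y`; if exactly one of these holds, deleting the
repeated step leaves a trail `u - v - y` or `x - u - v` of length 2, and if both hold the walk is
`v - u - v - u`, determined by the dart `(u, v)`. Finally, a trail of positive length differs
from its reverse, so the number of trails of length `t` counted with direction is `2 γ_t`.
-/

namespace Function.Involutive

variable {α : Type*} {f : α → α}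

theorem quot_mk_eq_quot_mk_iff (hf : Involutive f) {a b : α} :
    Quot.mk (fun a b => b = f a) a = Quot.mk _ b ↔ b = a ∨ b = f a := by
  have hequiv : Equivalence fun a b : α => b = a ∨ b = f a :=
    ⟨fun _ => .inl rfl, by rintro _ _ (rfl | rfl) <;> simp [hf _],
      by rintro _ _ _ (rfl | rfl) (rfl | rfl) <;> simp [hf _]⟩
  refine ⟨fun h => ?_, by rintro (rfl | rfl) <;> [rfl; exact Quot.sound rfl]⟩
  exact hequiv.eqvGen_iff.mp (Relation.EqvGen.mono (fun _ _ => .inr) _ _ (Quot.eqvGen_exact h))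

theorem two_mul_card_quot [Finite α] (hf : Involutive f) (hfix : ∀ a, f a ≠ a) :
    2 * Nat.card (Quot fun a b : α => b = f a) = Nat.card α := by
  classical
  have := Fintype.ofFinite α
  have := Fintype.ofFinite (Quot fun a b : α => b = f a)
  have hfiber (c : Quot fun a b : α => b = f a) : #{a | Quot.mk _ a = c} = 2 := by
    induction c using Quot.ind with | mk a₀ => ?_
    rw [show ({a | Quot.mk _ a = Quot.mk _ a₀} : Finset α) = {a₀, f a₀} by
      ext a; simp [hf.quot_mk_eq_quot_mk_iff, eq_comm (a := a), hf.eq_iff]]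
    exact card_pair (hfix a₀).symm
  rw [Nat.card_eq_fintype_card, Nat.card_eq_fintype_card, ← card_univ (α := α),
    card_eq_sum_card_fiberwise (f := Quot.mk fun a b : α => b = f a) (t := univ) (by simp),
    sum_congr rfl fun c _ => hfiber c, sum_const, card_univ, smul_eq_mul, mul_comm]

end Function.Involutive

theorem Nat.card_subtype_and_add_card_subtype_and_not {α : Type*} [Finite α] (c p : α → Prop) :
    Nat.card {x // c x ∧ p x} + Nat.card {x // c x ∧ ¬p x} = Nat.card {x // c x} := by
  classical
  have := Fintype.ofFinite α
  simp only [Nat.card_eq_fintype_card, Fintype.card_subtype, ← filter_filter]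
  exact card_filter_add_card_filter_not p

namespace SimpleGraph

variable (G : SimpleGraph V)

theorem sum_darts_eq_two_smul_sum_edgeFinset [Fintype V] [DecidableRel G.Adj]
    {M : Type*} [AddCommMonoid M] (f : Sym2 V → M) :
    ∑ d : G.Dart, f d.edge = 2 • ∑ e ∈ G.edgeFinset, f e := by
  classical
  calc ∑ d : G.Dart, f d.edge
      = ∑ e ∈ G.edgeFinset, ∑ d : G.Dart with d.edge = e, f e :=
        (sum_fiberwise_of_maps_to' (fun d _ => mem_edgeFinset.mpr d.edge_mem) f).symm
    _ = ∑ e ∈ G.edgeFinset, 2 • f e := sum_congr rfl fun e he => by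
        rw [sum_const, G.dart_edge_fiber_card e (mem_edgeFinset.mp he)]
    _ = 2 • ∑ e ∈ G.edgeFinset, f e := (smul_sum ..).symm

def IsAdjQuadruple (q : V × V × V × V) : Prop :=
  G.Adj q.1 q.2.1 ∧ G.Adj q.2.1 q.2.2.1 ∧ G.Adj q.2.2.1 q.2.2.2

def dartNeighborsEquiv :
    (Σ d : G.Dart, G.neighborSet d.fst × G.neighborSet d.snd) ≃ {q // G.IsAdjQuadruple q} where
  toFun := fun ⟨d, x, y⟩ => ⟨(x, d.fst, d.snd, y), x.2.symm, d.adj, y.2⟩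
  invFun q := ⟨⟨(q.1.2.1, q.1.2.2.1), q.2.2.1⟩, ⟨q.1.1, q.2.1.symm⟩, ⟨q.1.2.2.2, q.2.2.2⟩⟩
  left_inv _ := rfl
  right_inv _ := rfl

theorem card_isAdjQuadruple_eq_two_mul_sMetric [Fintype V] :
    Nat.card {q // G.IsAdjQuadruple q} = 2 * sMetric G := by
  let := Classical.decRel G.Adj
  rw [← Nat.card_congr G.dartNeighborsEquiv, Nat.card_eq_fintype_card, Fintype.card_sigma, sMetric,
    ← smul_eq_mul, ← sum_darts_eq_two_smul_sum_edgeFinset]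
  simp only [Fintype.card_prod, card_neighborSet_eq_degree]
  rfl

def IsTrailTriple (p : V × V × V) : Prop :=
  G.Adj p.1 p.2.1 ∧ G.Adj p.2.1 p.2.2 ∧ p.1 ≠ p.2.2

def IsTrailQuadruple (q : V × V × V × V) : Prop :=
  G.IsAdjQuadruple q ∧ q.1 ≠ q.2.2.1 ∧ q.2.1 ≠ q.2.2.2

def adjQuadrupleTrailEquiv :
    {q // (G.IsAdjQuadruple q ∧ ¬q.1 = q.2.2.1) ∧ ¬q.2.1 = q.2.2.2} ≃ {q // G.IsTrailQuadruple q} :=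
  Equiv.subtypeEquivRight fun _ => and_assoc

def adjQuadrupleBacktrackFirstEquiv :
    {q // (G.IsAdjQuadruple q ∧ q.1 = q.2.2.1) ∧ ¬q.2.1 = q.2.2.2} ≃ {p // G.IsTrailTriple p} where
  toFun q := ⟨(q.1.2.1, q.1.2.2.1, q.1.2.2.2), q.2.1.1.2.1, q.2.1.1.2.2, q.2.2⟩
  invFun p := ⟨(p.1.2.1, p.1.1, p.1.2.1, p.1.2.2), ⟨⟨p.2.1.symm, p.2.1, p.2.2.1⟩, rfl⟩, p.2.2.2⟩
  left_inv := by rintro ⟨⟨x, u, v, y⟩, ⟨-, rfl : x = v⟩, -⟩; rfl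
  right_inv _ := rfl

def adjQuadrupleBacktrackLastEquiv :
    {q // (G.IsAdjQuadruple q ∧ ¬q.1 = q.2.2.1) ∧ q.2.1 = q.2.2.2} ≃ {p // G.IsTrailTriple p} where
  toFun q := ⟨(q.1.1, q.1.2.1, q.1.2.2.1), q.2.1.1.1, q.2.1.1.2.1, q.2.1.2⟩
  invFun p := ⟨(p.1.1, p.1.2.1, p.1.2.2, p.1.2.1), ⟨⟨p.2.1, p.2.2.1, p.2.2.1.symm⟩, p.2.2.2⟩, rfl⟩
  left_inv := by rintro ⟨⟨x, u, v, y⟩, -, rfl : u = y⟩; rfl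
  right_inv _ := rfl

def adjQuadrupleBacktrackBothEquiv :
    {q // (G.IsAdjQuadruple q ∧ q.1 = q.2.2.1) ∧ q.2.1 = q.2.2.2} ≃ G.Dart where
  toFun q := ⟨(q.1.1, q.1.2.1), q.2.1.1.1⟩
  invFun d := ⟨(d.fst, d.snd, d.fst, d.snd), ⟨⟨d.adj, d.adj.symm, d.adj⟩, rfl⟩, rfl⟩
  left_inv := by rintro ⟨⟨x, u, v, y⟩, ⟨-, rfl : x = v⟩, rfl : u = y⟩; rfl
  right_inv _ := rfl

theorem card_isAdjQuadruple_eq_add [Finite V] :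
    Nat.card {q // G.IsAdjQuadruple q} = Nat.card {q // G.IsTrailQuadruple q} +
      2 * Nat.card {p // G.IsTrailTriple p} + Nat.card G.Dart := by
  rw [← Nat.card_subtype_and_add_card_subtype_and_not _ fun q => q.1 = q.2.2.1,
    ← Nat.card_subtype_and_add_card_subtype_and_not (fun q => G.IsAdjQuadruple q ∧ q.1 = q.2.2.1)
      fun q => q.2.1 = q.2.2.2,
    ← Nat.card_subtype_and_add_card_subtype_and_not (fun q => G.IsAdjQuadruple q ∧ ¬q.1 = q.2.2.1)
      fun q => q.2.1 = q.2.2.2,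
    Nat.card_congr G.adjQuadrupleTrailEquiv, Nat.card_congr G.adjQuadrupleBacktrackFirstEquiv,
    Nat.card_congr G.adjQuadrupleBacktrackLastEquiv,
    Nat.card_congr G.adjQuadrupleBacktrackBothEquiv]
  ring

end SimpleGraph

namespace TrailBundle

variable {G : SimpleGraph V} {t : ℕ}

theorem rev_involutive : Function.Involutive (rev : TrailBundle G t → TrailBundle G t) :=
  fun _ => Subtype.ext (by simp [rev])

theorem rev_ne_self (ht : t ≠ 0) (p : TrailBundle G t) : p.rev ≠ p := by
  obtain ⟨⟨u, v, w⟩, hw, rfl⟩ := p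
  dsimp only at ht
  intro h
  have hvu : v = u := congrArg (fun q : TrailBundle G _ => q.1.1) h
  have hpal : w.edges.reverse = w.edges := by
    simpa [rev] using congrArg (fun q : TrailBundle G _ => q.1.2.2.edges) h
  subst hvu
  rcases Nat.lt_or_ge w.length 2 with hlt | hge
  · exact G.irrefl (Walk.exists_length_eq_one_iff.mp ⟨w, by omega⟩)
  · have hlen : 1 < w.edges.length := by rw [Walk.length_edges]; omega
    have hends : w.edges[0] = w.edges[w.edges.length - 1] := by
      simpa [hpal] using List.getElem_reverse (l := w.edges) (i := 0) (by simp; omega)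
    have hidx := hw.edges_nodup.getElem_inj_iff.mp hends
    omega

instance [Finite V] : Finite (TrailBundle G t) := by
  classical
  have := Fintype.ofFinite V
  refine Finite.of_injective (β := (u : V) × (v : V) × {w : G.Walk u v // w.length = t})
    (fun p => ⟨p.1.1, p.1.2.1, p.1.2.2, p.2.2⟩) ?_
  rintro ⟨⟨u, v, w⟩, h⟩ ⟨⟨u', v', w'⟩, h'⟩ he
  obtain ⟨rfl, he⟩ := Sigma.mk.inj_iff.mp he
  obtain ⟨rfl, he⟩ := Sigma.mk.inj_iff.mp (eq_of_heq he)
  obtain rfl : w = w' := congrArg Subtype.val (eq_of_heq he)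
  rfl

theorem two_mul_gamma [Finite V] (ht : t ≠ 0) : 2 * gamma G t = Nat.card (TrailBundle G t) :=
  rev_involutive.two_mul_card_quot (rev_ne_self ht)

def ofDart (d : G.Dart) : TrailBundle G 1 :=
  ⟨⟨d.fst, d.snd, .cons d.adj .nil⟩, by simp, rfl⟩

def ofTrailTriple (p : {p // G.IsTrailTriple p}) : TrailBundle G 2 :=
  ⟨⟨p.1.1, p.1.2.2, .cons p.2.1 (.cons p.2.2.1 .nil)⟩, by
    obtain ⟨⟨x, u, y⟩, hxu, huy, hxy⟩ := p
    simp [Walk.isTrail_def, hxy, hxu.ne, huy.ne], rfl⟩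

def ofTrailQuadruple (q : {q // G.IsTrailQuadruple q}) : TrailBundle G 3 :=
  ⟨⟨q.1.1, q.1.2.2.2, .cons q.2.1.1 (.cons q.2.1.2.1 (.cons q.2.1.2.2 .nil))⟩, by
    obtain ⟨⟨x, u, v, y⟩, ⟨hxu, huv, hvy⟩, hxv, huy⟩ := q
    simp [Walk.isTrail_def, hxv, huy, huv.ne, hxu.ne, hvy.ne], rfl⟩

theorem ofDart_bijective : Function.Bijective (ofDart (G := G)) := by
  refine ⟨fun d d' h => ?_, ?_⟩
  · have := congrArg (fun p : TrailBundle G 1 => p.1.2.2.support) h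
    simp only [ofDart, Walk.support_cons, Walk.support_nil, List.cons.injEq, and_true] at this
    exact Dart.ext _ _ (Prod.ext this.1 this.2)
  · rintro ⟨⟨u, v, w⟩, -, hlen⟩
    cases w with
    | nil => simp at hlen
    | cons h w =>
      cases w with
      | nil => exact ⟨⟨(u, _), h⟩, rfl⟩
      | cons _ _ => simp at hlen

theorem ofTrailTriple_bijective : Function.Bijective (ofTrailTriple (G := G)) := by
  refine ⟨fun p p' h => ?_, ?_⟩
  · have := congrArg (fun p : TrailBundle G 2 => p.1.2.2.support) h
    simp only [ofTrailTriple, Walk.support_cons, Walk.support_nil, List.cons.injEq,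
      and_true] at this
    exact Subtype.ext (Prod.ext this.1 (Prod.ext this.2.1 this.2.2))
  · rintro ⟨⟨u, v, w⟩, ht, hlen⟩
    cases w with
    | nil => simp at hlen
    | cons h₁ w =>
      cases w with
      | nil => simp at hlen
      | cons h₂ w =>
        cases w with
        | nil =>
          refine ⟨⟨(u, _, v), h₁, h₂, ?_⟩, rfl⟩
          dsimp only
          rintro rfl
          simpa [Sym2.eq_swap] using ht.edges_nodup
        | cons _ _ => simp at hlen

theorem ofTrailQuadruple_bijective : Function.Bijective (ofTrailQuadruple (G := G)) := by
  refine ⟨fun q q' h => ?_, ?_⟩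
  · have := congrArg (fun p : TrailBundle G 3 => p.1.2.2.support) h
    simp only [ofTrailQuadruple, Walk.support_cons, Walk.support_nil, List.cons.injEq,
      and_true] at this
    exact Subtype.ext (Prod.ext this.1 (Prod.ext this.2.1 (Prod.ext this.2.2.1 this.2.2.2)))
  · rintro ⟨⟨u, v, w⟩, ht, hlen⟩
    cases w with
    | nil => simp at hlen
    | cons h₁ w =>
      cases w with
      | nil => simp at hlen
      | cons h₂ w =>
        cases w with
        | nil => simp at hlen
        | cons h₃ w =>
          cases w with
          | nil =>
            refine ⟨⟨(u, _, _, v), ⟨h₁, h₂, h₃⟩, ?_, ?_⟩, rfl⟩ <;>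
            · dsimp only
              rintro rfl
              simpa [Sym2.eq_swap] using ht.edges_nodup
          | cons _ _ => simp at hlen

end TrailBundle

/-- For any finite simple graph `G`, the second Zagreb index satisfies
`s(G) = γ₃(G) + 2·γ₂(G) + γ₁(G)`. -/
theorem sMetric_eq_gamma_three_add_two_gamma_two_add_gamma_one [Fintype V]
    (G : SimpleGraph V) :
    sMetric G = gamma G 3 + 2 * gamma G 2 + gamma G 1 := by
  have h₁ : 2 * gamma G 1 = Nat.card G.Dart :=
    (TrailBundle.two_mul_gamma one_ne_zero).trans
      (Nat.card_eq_of_bijective _ TrailBundle.ofDart_bijective).symm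
  have h₂ : 2 * gamma G 2 = Nat.card {p // G.IsTrailTriple p} :=
    (TrailBundle.two_mul_gamma two_ne_zero).trans
      (Nat.card_eq_of_bijective _ TrailBundle.ofTrailTriple_bijective).symm
  have h₃ : 2 * gamma G 3 = Nat.card {q // G.IsTrailQuadruple q} :=
    (TrailBundle.two_mul_gamma three_ne_zero).trans
      (Nat.card_eq_of_bijective _ TrailBundle.ofTrailQuadruple_bijective).symm
  have hwalks := G.card_isAdjQuadruple_eq_two_mul_sMetric
  have hsplit := G.card_isAdjQuadruple_eq_add
  omega
end

section
/- Let T be a finite tree and u, v distinct vertices of T with deg_T(u) = p ≥ 2 and deg_T(v) = t ≥ 2. Let u⁺ and v⁻ be the neighbors of u and v, respectively, on the unique path from u to v in T; let α = deg_T(u⁺) and β = deg_T(v⁻). Let A = N_T(u) \ {u⁺} and let N_T(v) \ {v⁻} be partitioned into a nonempty set B = {b₁,…,b_q} and a set C of size r; let D_A and D_C be the sums of the T-degrees of the vertices of A and C, respectively. Let T̃ be the tree obtained from T by deleting the edges vb₁,…,vb_q and adding the edges ub₁,…,ub_q (the neighbor switch S^B_{v→u}). If p ≥ r + 1, D_A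 > D_C, and additionally α ≥ β in case u and v are not adjacent, then s(T̃) > s(T). -/
open SimpleGraph Finset

variable {V : Type*}

/-- The neighbor switch `S^B_{v→u}`: delete the edges joining `v` to the vertices of `B`
and add the edges joining `u` to the vertices of `B`. -/
def switchGraph (T : SimpleGraph V) (u v : V) (B : Set V) : SimpleGraph V :=
  (T.deleteEdges {e | ∃ b ∈ B, e = s(v, b)}) ⊔
    SimpleGraph.fromEdgeSet {e | ∃ b ∈ B, e = s(u, b)}

set_option maxHeartbeats 1000000 in
private lemma sMetric_def' [Fintype V] (G : SimpleGraph V) [inst : DecidableRel G.Adj]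
    [instE : Fintype G.edgeSet] :
    sMetric G = ∑ e ∈ G.edgeFinset,
      Sym2.lift ⟨fun a b => G.degree a * G.degree b, fun _ _ => Nat.mul_comm _ _⟩ e := by
  unfold sMetric
  congr!

set_option maxHeartbeats 1000000 in
/-- Lemma 1 (neighbor switch increases the s-metric). -/
theorem sMetric_lt_sMetric_switchGraph [Fintype V] [DecidableEq V]
    (T : SimpleGraph V) [DecidableRel T.Adj] (hT : T.IsTree)
    (u v : V) (huv : u ≠ v) (p t r : ℕ)
    (hdegu : T.degree u = p) (hp : 2 ≤ p)
    (hdegv : T.degree v = t) (ht : 2 ≤ t)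
    (P : T.Walk u v) (hP : P.IsPath)
    (uplus vminus : V) (huplus : uplus = P.getVert 1)
    (hvminus : vminus = P.getVert (P.length - 1))
    (B C : Finset V) (hdisj : Disjoint B C)
    (hBC : B ∪ C = T.neighborFinset v \ {vminus})
    (hBne : B.Nonempty) (hCr : C.card = r)
    (hDADC : ∑ c ∈ C, T.degree c < ∑ a ∈ T.neighborFinset u \ {uplus}, T.degree a)
    (hpr : r + 1 ≤ p)
    (halphabeta : ¬T.Adj u v → T.degree vminus ≤ T.degree uplus) :
    sMetric T < sMetric (switchGraph T u v ↑B) := by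
  set T' := switchGraph T u v (↑B : Set V) with hT'def
  letI iT' : DecidableRel T'.Adj := Classical.decRel _
  set q := B.card with hqdef
  -- basic path facts
  have hlen : 1 ≤ P.length := by
    rcases Nat.eq_zero_or_pos P.length with h | h
    · exact absurd (P.eq_of_length_eq_zero h) huv
    · exact h
  have hupadj : T.Adj u uplus := by
    have h0 := P.adj_getVert_succ (i := 0) (by omega)
    rw [P.getVert_zero] at h0
    rwa [huplus]
  have hvmadj : T.Adj vminus v := by
    have h0 := P.adj_getVert_succ (i := P.length - 1) (by omega)
    rw [Nat.sub_add_cancel hlen, P.getVert_length] at h0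
    rwa [hvminus]
  have huniq : ∀ (W : T.Walk u v), W.IsPath → W = P := by
    intro W hW
    obtain ⟨P₀, _, hu⟩ := hT.existsUnique_path u v
    rw [hu W hW, hu P hP]
  have hadjcase : T.Adj u v → vminus = u ∧ uplus = v := by
    intro h
    have hW : (Walk.cons h Walk.nil).IsPath := by
      simp [Walk.cons_isPath_iff, huv]
    have hPW : P = Walk.cons h Walk.nil := (huniq _ hW).symm
    constructor
    · rw [hvminus, hPW]; simp
    · rw [huplus, hPW]; simp [Walk.getVert_cons_succ]
  have key : ∀ x, T.Adj v x → x ≠ vminus → x ≠ v ∧ x ≠ u ∧ ¬T.Adj u x := by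
    intro x hvx hxvm
    have hxv : x ≠ v := fun h => T.irrefl (h ▸ hvx)
    have hxu : x ≠ u := by
      rintro rfl
      exact hxvm ((hadjcase hvx.symm).1).symm
    refine ⟨hxv, hxu, fun hux => ?_⟩
    have hW : (Walk.cons hux (Walk.cons hvx.symm Walk.nil)).IsPath := by
      simp [Walk.cons_isPath_iff, huv, hxv, Ne.symm hxu]
    have hPW := huniq _ hW
    have hvx' : vminus = x := by
      rw [hvminus, ← hPW]
      simp [Walk.getVert_cons_succ]
    exact hxvm hvx'.symm
  have hmemv : ∀ x ∈ B ∪ C, T.Adj v x ∧ x ≠ vminus := by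
    intro x hx
    rw [hBC, Finset.mem_sdiff, mem_neighborFinset, Finset.mem_singleton] at hx
    exact hx
  have hBfact : ∀ b ∈ B, T.Adj v b ∧ b ≠ vminus ∧ b ≠ v ∧ b ≠ u ∧ ¬T.Adj u b := by
    intro b hb
    obtain ⟨h1, h2⟩ := hmemv b (Finset.mem_union_left _ hb)
    obtain ⟨h3, h4, h5⟩ := key b h1 h2
    exact ⟨h1, h2, h3, h4, h5⟩
  have hCfact : ∀ c ∈ C, T.Adj v c ∧ c ≠ vminus ∧ c ≠ v ∧ c ≠ u ∧ ¬T.Adj u c := by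
    intro c hc
    obtain ⟨h1, h2⟩ := hmemv c (Finset.mem_union_right _ hc)
    obtain ⟨h3, h4, h5⟩ := key c h1 h2
    exact ⟨h1, h2, h3, h4, h5⟩
  have huB : u ∉ B := fun h => (hBfact u h).2.2.2.1 rfl
  have hvB : v ∉ B := fun h => (hBfact v h).2.2.1 rfl
  have hq1 : 1 ≤ q := Finset.card_pos.mpr hBne
  -- adjacency in T'
  have hadj' : ∀ x y, T'.Adj x y ↔
      ((T.Adj x y ∧ ¬((x = v ∧ y ∈ B) ∨ (y = v ∧ x ∈ B))) ∨
        ((x = u ∧ y ∈ B) ∨ (y = u ∧ x ∈ B))) := by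
    intro x y
    have hmem : ∀ (w : V), (s(x, y) ∈ {e : Sym2 V | ∃ b ∈ (↑B : Set V), e = s(w, b)}) ↔
        ((x = w ∧ y ∈ B) ∨ (y = w ∧ x ∈ B)) := by
      intro w
      simp only [Set.mem_setOf_eq, Finset.mem_coe]
      constructor
      · rintro ⟨b, hb, he⟩
        rcases Sym2.eq_iff.mp he with ⟨h1, h2⟩ | ⟨h1, h2⟩
        · exact Or.inl ⟨h1, h2 ▸ hb⟩
        · exact Or.inr ⟨h2, h1 ▸ hb⟩
      · rintro (⟨rfl, hy⟩ | ⟨rfl, hx⟩)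
        · exact ⟨y, hy, rfl⟩
        · exact ⟨x, hx, Sym2.eq_swap⟩
    rw [hT'def, switchGraph, sup_adj, deleteEdges_adj, fromEdgeSet_adj, hmem v, hmem u]
    constructor
    · rintro (⟨ha, hn⟩ | ⟨hm, _⟩)
      · exact Or.inl ⟨ha, hn⟩
      · exact Or.inr hm
    · rintro (⟨ha, hn⟩ | hm)
      · exact Or.inl ⟨ha, hn⟩
      · refine Or.inr ⟨hm, ?_⟩
        rcases hm with ⟨rfl, hy⟩ | ⟨rfl, hx⟩
        · rintro rfl; exact huB hy
        · rintro rfl; exact huB hx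
  -- neighborhoods and degrees in T'
  have hNu : T'.neighborFinset u = T.neighborFinset u ∪ B := by
    ext y
    rw [mem_neighborFinset, hadj', Finset.mem_union, mem_neighborFinset]
    constructor
    · rintro (⟨h, -⟩ | ⟨⟨-, h⟩ | ⟨rfl, h⟩⟩)
      · exact Or.inl h
      · exact Or.inr h
      · exact absurd h huB
    · rintro (h | h)
      · refine Or.inl ⟨h, ?_⟩
        rintro (⟨rfl, -⟩ | ⟨rfl, hu2⟩)
        · exact huv rfl
        · exact huB hu2
      · exact Or.inr (Or.inl ⟨rfl, h⟩)
  have hNuBdisj : Disjoint (T.neighborFinset u) B := by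
    rw [Finset.disjoint_left]
    intro a ha hab
    exact (hBfact a hab).2.2.2.2 ((mem_neighborFinset _ _ _).mp ha)
  have hdegu' : T'.degree u = p + q := by
    show (T'.neighborFinset u).card = p + q
    rw [hNu, Finset.card_union_of_disjoint hNuBdisj]
    have : (T.neighborFinset u).card = p := hdegu
    rw [this]
  have hBsubNv : B ⊆ T.neighborFinset v := by
    intro b hb
    exact (mem_neighborFinset _ _ _).mpr (hBfact b hb).1
  have hNv : T'.neighborFinset v = T.neighborFinset v \ B := by
    ext y
    rw [mem_neighborFinset, hadj', Finset.mem_sdiff, mem_neighborFinset]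
    constructor
    · rintro (⟨h, hn⟩ | ⟨⟨h, -⟩ | ⟨rfl, h⟩⟩)
      · exact ⟨h, fun hy => hn (Or.inl ⟨rfl, hy⟩)⟩
      · exact absurd h (Ne.symm huv)
      · exact absurd h hvB
    · rintro ⟨h, hy⟩
      refine Or.inl ⟨h, ?_⟩
      rintro (⟨-, hy2⟩ | ⟨rfl, hv2⟩)
      · exact hy hy2
      · exact hvB hv2
  have hdegv' : T'.degree v = t - q := by
    show (T'.neighborFinset v).card = t - q
    rw [hNv, Finset.card_sdiff_of_subset hBsubNv]
    have : (T.neighborFinset v).card = t := hdegv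
    rw [this]
  have hdeg_other : ∀ x, x ≠ u → x ≠ v → T'.degree x = T.degree x := by
    intro x hxu hxv
    by_cases hxB : x ∈ B
    · have hvNx : v ∈ T.neighborFinset x :=
        (mem_neighborFinset _ _ _).mpr (hBfact x hxB).1.symm
      have huNx : u ∉ (T.neighborFinset x).erase v := by
        intro h
        have := (mem_neighborFinset _ _ _).mp (Finset.mem_of_mem_erase h)
        exact (hBfact x hxB).2.2.2.2 this.symm
      have hNx : T'.neighborFinset x = insert u ((T.neighborFinset x).erase v) := by
        ext y
        rw [mem_neighborFinset, hadj', Finset.mem_insert, Finset.mem_erase, mem_neighborFinset]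
        constructor
        · rintro (⟨h, hn⟩ | ⟨⟨h, -⟩ | ⟨rfl, -⟩⟩)
          · refine Or.inr ⟨?_, h⟩
            rintro rfl
            exact hn (Or.inr ⟨rfl, hxB⟩)
          · exact absurd h hxu
          · exact Or.inl rfl
        · rintro (rfl | ⟨hyv, h⟩)
          · exact Or.inr (Or.inr ⟨rfl, hxB⟩)
          · refine Or.inl ⟨h, ?_⟩
            rintro (⟨rfl, -⟩ | ⟨rfl, -⟩)
            · exact hxv rfl
            · exact hyv rfl
      show (T'.neighborFinset x).card = T.degree x
      rw [hNx, Finset.card_insert_of_notMem huNx, Finset.card_erase_of_mem hvNx]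
      have hpos : 0 < (T.neighborFinset x).card := Finset.card_pos.mpr ⟨v, hvNx⟩
      have : (T.neighborFinset x).card = T.degree x := rfl
      omega
    · have hNx : T'.neighborFinset x = T.neighborFinset x := by
        ext y
        rw [mem_neighborFinset, hadj', mem_neighborFinset]
        constructor
        · rintro (⟨h, -⟩ | ⟨⟨h, -⟩ | ⟨-, h⟩⟩)
          · exact h
          · exact absurd h hxu
          · exact absurd h hxB
        · intro h
          refine Or.inl ⟨h, ?_⟩
          rintro (⟨rfl, -⟩ | ⟨-, hx2⟩)
          · exact hxv rfl
          · exact hxB hx2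
      show (T'.neighborFinset x).card = T.degree x
      rw [hNx]
      rfl
  -- edge finsets
  set Bv : Finset (Sym2 V) := B.image (fun b => s(v, b)) with hBvdef
  set Bu : Finset (Sym2 V) := B.image (fun b => s(u, b)) with hBudef
  have hE' : T'.edgeFinset = (T.edgeFinset \ Bv) ∪ Bu := by
    apply Finset.coe_injective
    rw [coe_edgeFinset, Finset.coe_union, Finset.coe_sdiff, coe_edgeFinset, hBvdef, hBudef,
      Finset.coe_image, Finset.coe_image]
    rw [hT'def, switchGraph, edgeSet_sup, edgeSet_deleteEdges, edgeSet_fromEdgeSet]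
    congr 1
    · congr 1
      ext e
      simp only [Set.mem_setOf_eq, Set.mem_image, Finset.mem_coe]
      constructor
      · rintro ⟨b, hb, rfl⟩; exact ⟨b, hb, rfl⟩
      · rintro ⟨b, hb, rfl⟩; exact ⟨b, hb, rfl⟩
    · ext e
      simp only [Set.mem_diff, Set.mem_setOf_eq, Set.mem_image, Finset.mem_coe]
      constructor
      · rintro ⟨⟨b, hb, rfl⟩, -⟩; exact ⟨b, hb, rfl⟩
      · rintro ⟨b, hb, rfl⟩
        refine ⟨⟨b, hb, rfl⟩, ?_⟩
        exact Ne.symm (hBfact b hb).2.2.2.1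
  -- rewrite the metrics
  rw [sMetric_def' T, sMetric_def' T']
  set F : Sym2 V → ℕ :=
    Sym2.lift ⟨fun a b => T.degree a * T.degree b, fun _ _ => Nat.mul_comm _ _⟩ with hFdef
  set Gf : Sym2 V → ℕ :=
    Sym2.lift ⟨fun a b => T'.degree a * T'.degree b, fun _ _ => Nat.mul_comm _ _⟩ with hGdef
  have hFval : ∀ x y, F s(x, y) = T.degree x * T.degree y := by
    intro x y; simp [hFdef]
  have hGval : ∀ x y, Gf s(x, y) = T'.degree x * T'.degree y := by
    intro x y; simp [hGdef]
  have hBvsub : Bv ⊆ T.edgeFinset := by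
    intro e he
    rw [hBvdef, Finset.mem_image] at he
    obtain ⟨b, hb, rfl⟩ := he
    rw [mem_edgeFinset, mem_edgeSet]
    exact (hBfact b hb).1
  have hBuE : ∀ e ∈ Bu, e ∉ T.edgeFinset := by
    intro e he
    rw [hBudef, Finset.mem_image] at he
    obtain ⟨b, hb, rfl⟩ := he
    rw [mem_edgeFinset, mem_edgeSet]
    exact (hBfact b hb).2.2.2.2
  have hdisjEBu : Disjoint (T.edgeFinset \ Bv) Bu := by
    rw [Finset.disjoint_right]
    intro e he hes
    exact hBuE e he (Finset.mem_sdiff.mp hes).1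
  rw [hE', Finset.sum_union hdisjEBu, ← Finset.sum_sdiff hBvsub]
  have hsum_img : ∀ (w : V) (S : Finset V) (f : Sym2 V → ℕ),
      (∑ e ∈ S.image (fun x => s(w, x)), f e) = ∑ x ∈ S, f s(w, x) := by
    intro w S f
    refine Finset.sum_image ?_
    intro x hx y hy hxy
    rcases Sym2.eq_iff.mp hxy with ⟨-, h⟩ | ⟨h1, h2⟩
    · exact h
    · exact h2.trans h1
  -- abbreviations
  set DA := ∑ a ∈ T.neighborFinset u \ {uplus}, T.degree a with hDAdef
  set DB := ∑ b ∈ B, T.degree b with hDBdef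
  set DC := ∑ c ∈ C, T.degree c with hDCdef
  -- cardinality facts
  have hDBq : q ≤ DB := by
    rw [hDBdef, hqdef, Finset.card_eq_sum_ones]
    refine Finset.sum_le_sum fun b hb => ?_
    have : 0 < T.degree b :=
      (T.degree_pos_iff_exists_adj b).mpr ⟨v, (hBfact b hb).1.symm⟩
    omega
  have htq : t = q + r + 1 := by
    have hvmem : {vminus} ⊆ T.neighborFinset v :=
      Finset.singleton_subset_iff.mpr ((mem_neighborFinset _ _ _).mpr hvmadj.symm)
    have h1 : (T.neighborFinset v \ {vminus}).card = t - 1 := by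
      rw [Finset.card_sdiff_of_subset hvmem, Finset.card_singleton]
      have : (T.neighborFinset v).card = t := hdegv
      rw [this]
    have h2 : (B ∪ C).card = q + r := by
      rw [Finset.card_union_of_disjoint hdisj, hCr, hqdef]
    rw [hBC, h1] at h2
    omega
  have htmq : t - q = r + 1 := by omega
  -- local edge sets
  set Eu : Finset (Sym2 V) := (T.neighborFinset u).image (fun a => s(u, a)) with hEudef
  set Ev : Finset (Sym2 V) := C.image (fun c => s(v, c)) with hEvdef
  have hEusub : Eu ⊆ T.edgeFinset \ Bv := by
    intro e he
    rw [hEudef, Finset.mem_image] at he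
    obtain ⟨a, ha, rfl⟩ := he
    rw [Finset.mem_sdiff, mem_edgeFinset, mem_edgeSet]
    refine ⟨(mem_neighborFinset _ _ _).mp ha, ?_⟩
    rw [hBvdef, Finset.mem_image]
    rintro ⟨b, hb, hbe⟩
    rcases Sym2.eq_iff.mp hbe with ⟨h1, -⟩ | ⟨-, h2⟩
    · exact huv h1.symm
    · exact (hBfact b hb).2.2.2.1 h2
  have hEvsub : Ev ⊆ T.edgeFinset \ Bv := by
    intro e he
    rw [hEvdef, Finset.mem_image] at he
    obtain ⟨c, hc, rfl⟩ := he
    rw [Finset.mem_sdiff, mem_edgeFinset, mem_edgeSet]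
    refine ⟨(hCfact c hc).1, ?_⟩
    rw [hBvdef, Finset.mem_image]
    rintro ⟨b, hb, hbe⟩
    rcases Sym2.eq_iff.mp hbe with ⟨-, h2⟩ | ⟨h1, -⟩
    · exact Finset.disjoint_left.mp hdisj (h2 ▸ hb) hc
    · exact (hCfact c hc).2.2.1 h1.symm
  have hdisjEuEv : Disjoint Eu Ev := by
    rw [Finset.disjoint_left]
    intro e he hev
    rw [hEudef, Finset.mem_image] at he
    obtain ⟨a, ha, rfl⟩ := he
    rw [hEvdef, Finset.mem_image] at hev
    obtain ⟨c, hc, hce⟩ := hev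
    rcases Sym2.eq_iff.mp hce with ⟨h1, -⟩ | ⟨-, h2⟩
    · exact huv h1.symm
    · exact (hCfact c hc).2.2.2.1 h2
  -- sums over Bv, Bu, Eu, Ev
  have hBvF : ∑ e ∈ Bv, F e = t * DB := by
    rw [hBvdef, hsum_img, hDBdef, Finset.mul_sum]
    refine Finset.sum_congr rfl fun b _ => ?_
    rw [hFval, hdegv]
  have hBuG : ∑ e ∈ Bu, Gf e = (p + q) * DB := by
    rw [hBudef, hsum_img, hDBdef, Finset.mul_sum]
    refine Finset.sum_congr rfl fun b hb => ?_
    rw [hGval, hdegu', hdeg_other b (hBfact b hb).2.2.2.1 (hBfact b hb).2.2.1]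
  have hEvF : ∑ e ∈ Ev, F e = t * DC := by
    rw [hEvdef, hsum_img, hDCdef, Finset.mul_sum]
    refine Finset.sum_congr rfl fun c _ => ?_
    rw [hFval, hdegv]
  have hEvG : ∑ e ∈ Ev, Gf e = (r + 1) * DC := by
    rw [hEvdef, hsum_img, hDCdef, Finset.mul_sum]
    refine Finset.sum_congr rfl fun c hc => ?_
    rw [hGval, hdegv', htmq, hdeg_other c (hCfact c hc).2.2.2.1 (hCfact c hc).2.2.1]
  have hupmem : uplus ∈ T.neighborFinset u := (mem_neighborFinset _ _ _).mpr hupadj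
  have hNusumT : ∑ a ∈ T.neighborFinset u, T.degree a = DA + T.degree uplus := by
    rw [hDAdef]
    exact Finset.sum_eq_sum_sdiff_singleton_add hupmem _
  have hEuF : ∑ e ∈ Eu, F e = p * (DA + T.degree uplus) := by
    rw [hEudef, hsum_img, ← hNusumT, Finset.mul_sum]
    refine Finset.sum_congr rfl fun a _ => ?_
    rw [hFval, hdegu]
  have hNusumT' : ∑ a ∈ T.neighborFinset u, T'.degree a = DA + T'.degree uplus := by
    rw [Finset.sum_eq_sum_sdiff_singleton_add hupmem, hDAdef]
    congr 1
    refine Finset.sum_congr rfl fun a ha => ?_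
    rw [Finset.mem_sdiff, Finset.mem_singleton, mem_neighborFinset] at ha
    obtain ⟨haN, hane⟩ := ha
    have hau : a ≠ u := haN.ne'
    have hav : a ≠ v := by
      intro h
      rcases em (T.Adj u v) with hA | hA
      · exact hane (h.trans (hadjcase hA).2.symm)
      · exact hA (h ▸ haN)
    exact hdeg_other a hau hav
  have hEuG : ∑ e ∈ Eu, Gf e = (p + q) * (DA + T'.degree uplus) := by
    rw [hEudef, hsum_img, ← hNusumT', Finset.mul_sum]
    refine Finset.sum_congr rfl fun a _ => ?_
    rw [hGval, hdegu']
  by_cases hA : T.Adj u v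
  · -- the vertices u and v are adjacent; then vminus = u and uplus = v
    obtain ⟨hvmu', hupv'⟩ := hadjcase hA
    set S : Finset (Sym2 V) := Eu ∪ Ev with hSdef
    have hSsub : S ⊆ T.edgeFinset \ Bv := Finset.union_subset hEusub hEvsub
    have main : ∀ x y, T.Adj x y → s(x, y) ∉ Bv → s(x, y) ∉ S → x ≠ u ∧ x ≠ v := by
      intro x y hxy hBve hSe
      constructor
      · rintro rfl
        exact hSe (Finset.mem_union_left _
          (Finset.mem_image.mpr ⟨y, (mem_neighborFinset _ _ _).mpr hxy, rfl⟩))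
      · intro hxveq
        rw [hxveq] at hxy hBve hSe
        have hyN : y ∈ T.neighborFinset v := (mem_neighborFinset _ _ _).mpr hxy
        by_cases hyvm : y = vminus
        · refine absurd ?_ hSe
          apply Finset.mem_union_left
          rw [hEudef, Finset.mem_image]
          exact ⟨v, (mem_neighborFinset _ _ _).mpr hA, by rw [hyvm, hvmu', Sym2.eq_swap]⟩
        · have hyBC : y ∈ B ∪ C := by
            rw [hBC, Finset.mem_sdiff, Finset.mem_singleton]
            exact ⟨hyN, hyvm⟩
          rcases Finset.mem_union.mp hyBC with h | h
          · exact hBve (Finset.mem_image.mpr ⟨y, h, rfl⟩)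
          · exact hSe (Finset.mem_union_right _ (Finset.mem_image.mpr ⟨y, h, rfl⟩))
    have hrest : ∀ e ∈ (T.edgeFinset \ Bv) \ S, F e = Gf e := by
      intro e he
      induction e using Sym2.ind with
      | _ x y =>
        rw [Finset.mem_sdiff, Finset.mem_sdiff, mem_edgeFinset, mem_edgeSet] at he
        obtain ⟨⟨hxy, hBve⟩, hSe⟩ := he
        obtain ⟨hxu, hxv⟩ := main x y hxy hBve hSe
        obtain ⟨hyu, hyv⟩ := main y x hxy.symm (by rwa [Sym2.eq_swap]) (by rwa [Sym2.eq_swap])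
        rw [hFval, hGval, hdeg_other x hxu hxv, hdeg_other y hyu hyv]
    have hreq : ∑ e ∈ (T.edgeFinset \ Bv) \ S, F e = ∑ e ∈ (T.edgeFinset \ Bv) \ S, Gf e :=
      Finset.sum_congr rfl hrest
    have hdegup' : T'.degree uplus = t - q := by rw [hupv', hdegv']
    have hSF : ∑ e ∈ S, F e = p * (DA + T.degree uplus) + t * DC := by
      rw [hSdef, Finset.sum_union hdisjEuEv, hEuF, hEvF]
    have hSG : ∑ e ∈ S, Gf e = (p + q) * (DA + (r + 1)) + (r + 1) * DC := by
      rw [hSdef, Finset.sum_union hdisjEuEv, hEuG, hEvG, hdegup', htmq]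
    rw [← Finset.sum_sdiff hSsub (f := F), ← Finset.sum_sdiff hSsub (f := Gf), hreq,
      add_assoc, add_assoc]
    refine Nat.add_lt_add_left ?_ _
    rw [hSF, hSG, hBvF, hBuG]
    have hα : T.degree uplus = t := by rw [hupv', hdegv]
    rw [hα]
    obtain ⟨k, hk⟩ : ∃ k, DA = DC + 1 + k := ⟨DA - DC - 1, by omega⟩
    obtain ⟨m, hm⟩ : ∃ m, DB = q + m := ⟨DB - q, by omega⟩
    obtain ⟨d, hd⟩ : ∃ d, p = r + 1 + d := ⟨p - (r + 1), by omega⟩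
    have h0 : 0 < q + q * k + d * m :=
      calc 0 < q := hq1
        _ ≤ q + q * k := Nat.le_add_right _ _
        _ ≤ q + q * k + d * m := Nat.le_add_right _ _
    calc p * (DA + t) + t * DC + t * DB
        < p * (DA + t) + t * DC + t * DB + (q + q * k + d * m) :=
          Nat.lt_add_of_pos_right h0
      _ = (p + q) * (DA + (r + 1)) + (r + 1) * DC + (p + q) * DB := by
          rw [hk, hm, hd, htq]; ring
  · -- u and v are not adjacent
    have hupu : uplus ≠ u := hupadj.ne'
    have hupv : uplus ≠ v := fun h => hA (h ▸ hupadj)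
    have hvmu : vminus ≠ u := fun h => hA (h ▸ hvmadj)
    have hvmv : vminus ≠ v := hvmadj.ne
    set Evm : Finset (Sym2 V) := {s(v, vminus)} with hEvmdef
    have hEvmsub : Evm ⊆ T.edgeFinset \ Bv := by
      intro e he
      rw [hEvmdef, Finset.mem_singleton] at he
      subst he
      rw [Finset.mem_sdiff, mem_edgeFinset, mem_edgeSet]
      refine ⟨hvmadj.symm, ?_⟩
      rw [hBvdef, Finset.mem_image]
      rintro ⟨b, hb, hbe⟩
      rcases Sym2.eq_iff.mp hbe with ⟨-, h2⟩ | ⟨h1, -⟩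
      · exact (hBfact b hb).2.1 h2
      · exact hvmv h1.symm
    have hdisjEuEvm : Disjoint Eu Evm := by
      rw [Finset.disjoint_left]
      intro e he hev
      rw [hEudef, Finset.mem_image] at he
      obtain ⟨a, ha, rfl⟩ := he
      rw [hEvmdef, Finset.mem_singleton] at hev
      rcases Sym2.eq_iff.mp hev with ⟨h1, -⟩ | ⟨h1, -⟩
      · exact huv h1
      · exact hvmu h1.symm
    have hdisjEvEvm : Disjoint Ev Evm := by
      rw [Finset.disjoint_left]
      intro e he hev
      rw [hEvdef, Finset.mem_image] at he
      obtain ⟨c, hc, rfl⟩ := he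
      rw [hEvmdef, Finset.mem_singleton] at hev
      rcases Sym2.eq_iff.mp hev with ⟨-, h2⟩ | ⟨h1, -⟩
      · exact (hCfact c hc).2.1 h2
      · exact hvmv h1.symm
    set S : Finset (Sym2 V) := Eu ∪ Ev ∪ Evm with hSdef
    have hSsub : S ⊆ T.edgeFinset \ Bv :=
      Finset.union_subset (Finset.union_subset hEusub hEvsub) hEvmsub
    have main : ∀ x y, T.Adj x y → s(x, y) ∉ Bv → s(x, y) ∉ S → x ≠ u ∧ x ≠ v := by
      intro x y hxy hBve hSe
      constructor
      · rintro rfl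
        exact hSe (Finset.mem_union_left _ (Finset.mem_union_left _
          (Finset.mem_image.mpr ⟨y, (mem_neighborFinset _ _ _).mpr hxy, rfl⟩)))
      · intro hxveq
        rw [hxveq] at hxy hBve hSe
        have hyN : y ∈ T.neighborFinset v := (mem_neighborFinset _ _ _).mpr hxy
        by_cases hyvm : y = vminus
        · refine absurd ?_ hSe
          apply Finset.mem_union_right
          rw [hEvmdef, Finset.mem_singleton, hyvm]
        · have hyBC : y ∈ B ∪ C := by
            rw [hBC, Finset.mem_sdiff, Finset.mem_singleton]
            exact ⟨hyN, hyvm⟩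
          rcases Finset.mem_union.mp hyBC with h | h
          · exact hBve (Finset.mem_image.mpr ⟨y, h, rfl⟩)
          · exact hSe (Finset.mem_union_left _ (Finset.mem_union_right _
              (Finset.mem_image.mpr ⟨y, h, rfl⟩)))
    have hrest : ∀ e ∈ (T.edgeFinset \ Bv) \ S, F e = Gf e := by
      intro e he
      induction e using Sym2.ind with
      | _ x y =>
        rw [Finset.mem_sdiff, Finset.mem_sdiff, mem_edgeFinset, mem_edgeSet] at he
        obtain ⟨⟨hxy, hBve⟩, hSe⟩ := he
        obtain ⟨hxu, hxv⟩ := main x y hxy hBve hSe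
        obtain ⟨hyu, hyv⟩ := main y x hxy.symm (by rwa [Sym2.eq_swap]) (by rwa [Sym2.eq_swap])
        rw [hFval, hGval, hdeg_other x hxu hxv, hdeg_other y hyu hyv]
    have hreq : ∑ e ∈ (T.edgeFinset \ Bv) \ S, F e = ∑ e ∈ (T.edgeFinset \ Bv) \ S, Gf e :=
      Finset.sum_congr rfl hrest
    have hSF : ∑ e ∈ S, F e = p * (DA + T.degree uplus) + t * DC + t * T.degree vminus := by
      rw [hSdef, Finset.sum_union (Finset.disjoint_union_left.mpr ⟨hdisjEuEvm, hdisjEvEvm⟩),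
        Finset.sum_union hdisjEuEv, hEuF, hEvF, hEvmdef, Finset.sum_singleton, hFval, hdegv]
    have hSG : ∑ e ∈ S, Gf e = (p + q) * (DA + T.degree uplus) + (r + 1) * DC
        + (r + 1) * T.degree vminus := by
      rw [hSdef, Finset.sum_union (Finset.disjoint_union_left.mpr ⟨hdisjEuEvm, hdisjEvEvm⟩),
        Finset.sum_union hdisjEuEv, hEuG, hEvG, hEvmdef, Finset.sum_singleton, hGval, hdegv',
        htmq, hdeg_other uplus hupu hupv, hdeg_other vminus hvmu hvmv]
    rw [← Finset.sum_sdiff hSsub (f := F), ← Finset.sum_sdiff hSsub (f := Gf), hreq,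
      add_assoc, add_assoc]
    refine Nat.add_lt_add_left ?_ _
    rw [hSF, hSG, hBvF, hBuG]
    have hβα : T.degree vminus ≤ T.degree uplus := halphabeta hA
    obtain ⟨k, hk⟩ : ∃ k, DA = DC + 1 + k := ⟨DA - DC - 1, by omega⟩
    obtain ⟨m, hm⟩ : ∃ m, DB = q + m := ⟨DB - q, by omega⟩
    obtain ⟨d, hd⟩ : ∃ d, p = r + 1 + d := ⟨p - (r + 1), by omega⟩
    obtain ⟨s0, hs0⟩ : ∃ s0, T.degree uplus = T.degree vminus + s0 :=
      ⟨T.degree uplus - T.degree vminus, by omega⟩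
    have h0 : 0 < q + q * k + q * s0 + d * q + d * m :=
      calc 0 < q := hq1
        _ ≤ q + q * k := Nat.le_add_right _ _
        _ ≤ q + q * k + q * s0 := Nat.le_add_right _ _
        _ ≤ q + q * k + q * s0 + d * q := Nat.le_add_right _ _
        _ ≤ q + q * k + q * s0 + d * q + d * m := Nat.le_add_right _ _
    calc p * (DA + T.degree uplus) + t * DC + t * T.degree vminus + t * DB
        < p * (DA + T.degree uplus) + t * DC + t * T.degree vminus + t * DB
            + (q + q * k + q * s0 + d * q + d * m) :=
          Nat.lt_add_of_pos_right h0
      _ = (p + q) * (DA + T.degree uplus) + (r + 1) * DC + (r + 1) * T.degree vminus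
            + (p + q) * DB := by
          rw [hk, hm, hd, hs0, htq]; ring
end

section
/- Let T be a finite tree and u, v distinct vertices of T with deg_T(u) ≥ 2 and deg_T(v) ≥ 2. Let u⁺ and v⁻ be the neighbors of u and v on the unique path from u to v in T, and let T̃ be the tree obtained from T by the total neighbor switch S^B_{v→u} with B = N_T(v) \ {v⁻}, i.e. by deleting all edges from v to B and adding edges from u to every vertex of B. If additionally deg_T(u⁺) ≥ deg_T(v⁻) in case u and v are not adjacent, then s(T̃) > s(T). -/
open SimpleGraph Finset

variable {V : Type*}

lemma sMetric_eq_sum [Fintype V] (G : SimpleGraph V) [DecidableRel G.Adj]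
    [Fintype G.edgeSet] :
    sMetric G = ∑ e ∈ G.edgeFinset,
      Sym2.lift ⟨fun a b => G.degree a * G.degree b, fun _ _ => Nat.mul_comm _ _⟩ e := by
  unfold sMetric
  congr!

lemma tree_no_triangle {T : SimpleGraph V} (hT : T.IsTree) {a b c : V}
    (hab : T.Adj a b) (hbc : T.Adj b c) (hca : T.Adj c a) : False := by
  obtain ⟨q, hq, huniq⟩ := hT.existsUnique_path a b
  have h1 : (SimpleGraph.Walk.cons hab SimpleGraph.Walk.nil : T.Walk a b).IsPath := by
    simp [SimpleGraph.Walk.cons_isPath_iff, hab.ne]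
  have h2 : (SimpleGraph.Walk.cons hca.symm
      (SimpleGraph.Walk.cons hbc.symm SimpleGraph.Walk.nil) : T.Walk a b).IsPath := by
    simp [SimpleGraph.Walk.cons_isPath_iff, hca.ne', hbc.ne', hab.ne]
  have he := (huniq _ h1).trans (huniq _ h2).symm
  have := congrArg SimpleGraph.Walk.length he
  simp at this

/-- Corollary 1 (total neighbor switch increases the s-metric). -/
theorem sMetric_lt_sMetric_totalSwitch [Fintype V] [DecidableEq V]
    (T : SimpleGraph V) [DecidableRel T.Adj] (hT : T.IsTree)
    (u v : V) (huv : u ≠ v)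
    (hdegu : 2 ≤ T.degree u) (hdegv : 2 ≤ T.degree v)
    (P : T.Walk u v) (hP : P.IsPath)
    (uplus vminus : V) (huplus : uplus = P.getVert 1)
    (hvminus : vminus = P.getVert (P.length - 1))
    (halphabeta : ¬T.Adj u v → T.degree vminus ≤ T.degree uplus) :
    sMetric T < sMetric (switchGraph T u v (T.neighborSet v \ {vminus})) := by
  classical
  -- basic path facts
  have hlen1 : 1 ≤ P.length := by
    rcases Nat.eq_zero_or_pos P.length with h | h
    · exact absurd (SimpleGraph.Walk.eq_of_length_eq_zero h) huv
    · exact h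
  have hadj_vm : T.Adj vminus v := by
    have h := P.adj_getVert_succ (i := P.length - 1) (by omega)
    rw [Nat.sub_add_cancel hlen1, P.getVert_length] at h
    rwa [hvminus]
  have hadj_up : T.Adj u uplus := by
    have h := P.adj_getVert_succ (i := 0) (by omega)
    rw [P.getVert_zero] at h
    rwa [huplus]
  have hvm_ne_v : vminus ≠ v := hadj_vm.ne
  have hadj_case : T.Adj u v → vminus = u := by
    intro h
    obtain ⟨q, hq, huniq⟩ := hT.existsUnique_path u v
    have h1 : (SimpleGraph.Walk.cons h SimpleGraph.Walk.nil : T.Walk u v).IsPath := by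
      simp [SimpleGraph.Walk.cons_isPath_iff, huv]
    have hPe : P = SimpleGraph.Walk.cons h SimpleGraph.Walk.nil :=
      (huniq _ hP).trans (huniq _ h1).symm
    rw [hvminus, hPe]
    simp
  have hnonadj_case : ¬T.Adj u v → ∀ w, T.Adj u w → T.Adj v w → w = vminus := by
    intro hn w h1 h2
    obtain ⟨q, hq, huniq⟩ := hT.existsUnique_path u v
    have hw : (SimpleGraph.Walk.cons h1
        (SimpleGraph.Walk.cons h2.symm SimpleGraph.Walk.nil) : T.Walk u v).IsPath := by
      simp [SimpleGraph.Walk.cons_isPath_iff, h1.ne, h2.ne', huv]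
    have hPe : P = SimpleGraph.Walk.cons h1
        (SimpleGraph.Walk.cons h2.symm SimpleGraph.Walk.nil) :=
      (huniq _ hP).trans (huniq _ hw).symm
    rw [hvminus, hPe]
    simp [SimpleGraph.Walk.getVert_cons_succ]
  -- facts about B
  set Bs : Set V := T.neighborSet v \ {vminus} with hBs
  have hmemBs : ∀ x, x ∈ Bs ↔ T.Adj v x ∧ x ≠ vminus := by
    intro x; simp [hBs, SimpleGraph.mem_neighborSet]
  have hBu : ∀ b ∈ Bs, ¬ T.Adj u b := by
    intro b hb hub
    rw [hmemBs] at hb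
    by_cases h : T.Adj u v
    · exact tree_no_triangle hT h hb.1 hub.symm
    · exact hb.2 (hnonadj_case h b hub hb.1)
  have hBnu : ∀ b ∈ Bs, b ≠ u := by
    intro b hb heq
    rw [hmemBs] at hb
    subst heq
    exact hb.2 (hadj_case hb.1.symm).symm
  have hBnv : ∀ b ∈ Bs, b ≠ v := by
    intro b hb
    exact (((hmemBs b).1 hb).1).ne'
  have hu_nB : u ∉ Bs := fun h => hBnu u h rfl
  have hv_nB : v ∉ Bs := fun h => hBnv v h rfl
  have hvm_nB : vminus ∉ Bs := fun h => ((hmemBs _).1 h).2 rfl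
  set G' := switchGraph T u v Bs with hG'
  have hmemdel : ∀ x y : V, (∃ b ∈ Bs, s(x, y) = s(v, b)) ↔
      ((x = v ∧ y ∈ Bs) ∨ (y = v ∧ x ∈ Bs)) := by
    intro x y
    constructor
    · rintro ⟨b, hb, he⟩
      rw [Sym2.eq_iff] at he
      rcases he with ⟨h1, h2⟩ | ⟨h1, h2⟩
      · exact Or.inl ⟨h1, h2 ▸ hb⟩
      · exact Or.inr ⟨h2, h1 ▸ hb⟩
    · rintro (⟨h1, h2⟩ | ⟨h1, h2⟩)
      · exact ⟨y, h2, by rw [h1]⟩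
      · exact ⟨x, h2, by rw [h1, Sym2.eq_swap]⟩
  have hmemadd : ∀ x y : V, (∃ b ∈ Bs, s(x, y) = s(u, b)) ↔
      ((x = u ∧ y ∈ Bs) ∨ (y = u ∧ x ∈ Bs)) := by
    intro x y
    constructor
    · rintro ⟨b, hb, he⟩
      rw [Sym2.eq_iff] at he
      rcases he with ⟨h1, h2⟩ | ⟨h1, h2⟩
      · exact Or.inl ⟨h1, h2 ▸ hb⟩
      · exact Or.inr ⟨h2, h1 ▸ hb⟩
    · rintro (⟨h1, h2⟩ | ⟨h1, h2⟩)
      · exact ⟨y, h2, by rw [h1]⟩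
      · exact ⟨x, h2, by rw [h1, Sym2.eq_swap]⟩
  have hAdj : ∀ x y, G'.Adj x y ↔
      (T.Adj x y ∧ ¬((x = v ∧ y ∈ Bs) ∨ (y = v ∧ x ∈ Bs))) ∨
      ((x = u ∧ y ∈ Bs) ∨ (y = u ∧ x ∈ Bs)) := by
    intro x y
    rw [hG', switchGraph]
    simp only [SimpleGraph.sup_adj, SimpleGraph.deleteEdges_adj, SimpleGraph.fromEdgeSet_adj,
      Set.mem_setOf_eq, hmemdel, hmemadd]
    constructor
    · rintro (h | h)
      · exact Or.inl h
      · exact Or.inr h.1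
    · rintro (h | h)
      · exact Or.inl h
      · refine Or.inr ⟨h, ?_⟩
        rcases h with ⟨h1, h2⟩ | ⟨h1, h2⟩
        · subst h1; exact fun he => hBnu y h2 he.symm
        · subst h1; exact fun he => hBnu x h2 he
  -- degrees in G'
  have hNv : G'.neighborFinset v = {vminus} := by
    ext y
    simp only [SimpleGraph.mem_neighborFinset, Finset.mem_singleton, hAdj]
    constructor
    · rintro (⟨ha, hn⟩ | (⟨h1, h2⟩ | ⟨h1, h2⟩))
      · by_contra hne
        exact hn (Or.inl ⟨trivial, (hmemBs y).2 ⟨ha, hne⟩⟩)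
      · exact absurd h1 (Ne.symm huv)
      · exact absurd h2 hv_nB
    · rintro rfl
      refine Or.inl ⟨hadj_vm.symm, ?_⟩
      rintro (⟨_, h⟩ | ⟨h, _⟩)
      · exact hvm_nB h
      · exact hvm_ne_v h
  have hdeg'v : G'.degree v = 1 := by
    rw [← SimpleGraph.card_neighborFinset_eq_degree, hNv, Finset.card_singleton]
  have hNu : G'.neighborFinset u = T.neighborFinset u ∪ Bs.toFinset := by
    ext y
    simp only [SimpleGraph.mem_neighborFinset, Finset.mem_union, Set.mem_toFinset, hAdj]
    constructor
    · rintro (⟨ha, _⟩ | (⟨_, h2⟩ | ⟨h1, h2⟩))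
      · exact Or.inl ha
      · exact Or.inr h2
      · exact absurd h2 hu_nB
    · rintro (ha | hb)
      · refine Or.inl ⟨ha, ?_⟩
        rintro (⟨h1, _⟩ | ⟨_, h2⟩)
        · exact huv h1
        · exact hu_nB h2
      · exact Or.inr (Or.inl ⟨trivial, hb⟩)
  have hBsF : Bs.toFinset = T.neighborFinset v \ {vminus} := by
    ext x
    simp [hBs, SimpleGraph.mem_neighborFinset]
  have hvm_mem : vminus ∈ T.neighborFinset v := by
    simp [SimpleGraph.mem_neighborFinset, hadj_vm.symm]
  have hcardBs : Bs.toFinset.card = T.degree v - 1 := by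
    rw [hBsF, Finset.card_sdiff_of_subset (by simpa using hvm_mem)]
    simp [SimpleGraph.card_neighborFinset_eq_degree]
  have hdeg'u : G'.degree u = T.degree u + (T.degree v - 1) := by
    rw [← SimpleGraph.card_neighborFinset_eq_degree, hNu,
      Finset.card_union_of_disjoint, hcardBs, SimpleGraph.card_neighborFinset_eq_degree]
    rw [Finset.disjoint_right]
    intro b hb hmem
    rw [Set.mem_toFinset] at hb
    exact hBu b hb (by simpa [SimpleGraph.mem_neighborFinset] using hmem)
  have hdeg'other : ∀ x, x ≠ u → x ≠ v → G'.degree x = T.degree x := by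
    intro x hxu hxv
    rw [← SimpleGraph.card_neighborFinset_eq_degree, ← SimpleGraph.card_neighborFinset_eq_degree]
    by_cases hxB : x ∈ Bs
    · have hvmem : v ∈ T.neighborFinset x := by
        simp [SimpleGraph.mem_neighborFinset]
        exact ((hmemBs x).1 hxB).1.symm
      have hN : G'.neighborFinset x = (T.neighborFinset x \ {v}) ∪ {u} := by
        ext y
        simp only [SimpleGraph.mem_neighborFinset, Finset.mem_union, Finset.mem_sdiff,
          Finset.mem_singleton, hAdj]
        constructor
        · rintro (⟨ha, hn⟩ | (⟨h1, h2⟩ | ⟨h1, h2⟩))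
          · exact Or.inl ⟨ha, fun hyv => hn (Or.inr ⟨hyv, hxB⟩)⟩
          · exact absurd h1 hxu
          · exact Or.inr h1
        · rintro (⟨ha, hyv⟩ | rfl)
          · refine Or.inl ⟨ha, ?_⟩
            rintro (⟨h1, _⟩ | ⟨h1, _⟩)
            · exact hxv h1
            · exact hyv h1
          · exact Or.inr (Or.inr ⟨rfl, hxB⟩)
      have hcard1 : 1 ≤ (T.neighborFinset x).card := Finset.card_pos.2 ⟨v, hvmem⟩
      rw [hN, Finset.card_union_of_disjoint, Finset.card_sdiff_of_subset (by simpa using hvmem),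
        Finset.card_singleton, Finset.card_singleton]
      · omega
      · rw [Finset.disjoint_right]
        intro b hb hmem
        rw [Finset.mem_singleton] at hb
        subst hb
        rw [Finset.mem_sdiff, SimpleGraph.mem_neighborFinset] at hmem
        exact hBu x hxB hmem.1.symm
    · congr 1
      ext y
      simp only [SimpleGraph.mem_neighborFinset, hAdj]
      constructor
      · rintro (⟨ha, _⟩ | (⟨h1, h2⟩ | ⟨h1, h2⟩))
        · exact ha
        · exact absurd h1 hxu
        · exact absurd h2 hxB
      · intro ha
        refine Or.inl ⟨ha, ?_⟩
        rintro (⟨h1, _⟩ | ⟨_, h2⟩)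
        · exact hxv h1
        · exact hxB h2
  have hmono : ∀ x, x ≠ v → T.degree x ≤ G'.degree x := by
    intro x hxv
    by_cases hxu : x = u
    · subst hxu
      rw [hdeg'u]
      omega
    · rw [hdeg'other x hxu hxv]
  -- edge finset decomposition
  set delF : Finset (Sym2 V) := Bs.toFinset.image (fun b => s(v, b)) with hdelFdef
  set addF : Finset (Sym2 V) := Bs.toFinset.image (fun b => s(u, b)) with haddFdef
  have hdelF : ∀ x y : V, (s(x, y) ∈ delF) ↔ ((x = v ∧ y ∈ Bs) ∨ (y = v ∧ x ∈ Bs)) := by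
    intro x y
    rw [hdelFdef, Finset.mem_image]
    constructor
    · rintro ⟨b, hb, he⟩
      exact (hmemdel x y).1 ⟨b, Set.mem_toFinset.1 hb, he.symm⟩
    · intro h
      obtain ⟨b, hb, he⟩ := (hmemdel x y).2 h
      exact ⟨b, Set.mem_toFinset.2 hb, he.symm⟩
  have haddF : ∀ x y : V, (s(x, y) ∈ addF) ↔ ((x = u ∧ y ∈ Bs) ∨ (y = u ∧ x ∈ Bs)) := by
    intro x y
    rw [haddFdef, Finset.mem_image]
    constructor
    · rintro ⟨b, hb, he⟩
      exact (hmemadd x y).1 ⟨b, Set.mem_toFinset.1 hb, he.symm⟩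
    · intro h
      obtain ⟨b, hb, he⟩ := (hmemadd x y).2 h
      exact ⟨b, Set.mem_toFinset.2 hb, he.symm⟩
  have hEF : G'.edgeFinset = (T.edgeFinset \ delF) ∪ addF := by
    ext e
    induction e using Sym2.ind with
    | _ x y =>
      simp only [SimpleGraph.mem_edgeFinset, SimpleGraph.mem_edgeSet, Finset.mem_union,
        Finset.mem_sdiff, hAdj, hdelF, haddF]
  -- rewrite the sums
  have hsub : delF ⊆ T.edgeFinset := by
    intro e he
    rw [hdelFdef, Finset.mem_image] at he
    obtain ⟨b, hb, rfl⟩ := he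
    rw [SimpleGraph.mem_edgeFinset, SimpleGraph.mem_edgeSet]
    exact ((hmemBs b).1 (Set.mem_toFinset.1 hb)).1
  have hdisj2 : Disjoint (T.edgeFinset \ delF) addF := by
    rw [Finset.disjoint_right]
    intro e he hmem
    rw [haddFdef, Finset.mem_image] at he
    obtain ⟨b, hb, rfl⟩ := he
    rw [Finset.mem_sdiff, SimpleGraph.mem_edgeFinset, SimpleGraph.mem_edgeSet] at hmem
    exact hBu b (Set.mem_toFinset.1 hb) hmem.1
  have hinj1 : ∀ x ∈ Bs.toFinset, ∀ y ∈ Bs.toFinset, s(v, x) = s(v, y) → x = y := by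
    intro x hx y hy he
    rw [Sym2.eq_iff] at he
    rcases he with ⟨_, h⟩ | ⟨h1, h2⟩
    · exact h
    · exact h2.trans h1
  have hinj2 : ∀ x ∈ Bs.toFinset, ∀ y ∈ Bs.toFinset, s(u, x) = s(u, y) → x = y := by
    intro x hx y hy he
    rw [Sym2.eq_iff] at he
    rcases he with ⟨_, h⟩ | ⟨h1, h2⟩
    · exact h
    · exact h2.trans h1
  rw [sMetric_eq_sum T, sMetric_eq_sum G', hEF, Finset.sum_union hdisj2,
    ← Finset.sum_sdiff hsub, hdelFdef, haddFdef, Finset.sum_image hinj1,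
    Finset.sum_image hinj2]
  simp only [Sym2.lift_mk]
  have hrw : ∑ b ∈ Bs.toFinset, G'.degree u * G'.degree b
      = ∑ b ∈ Bs.toFinset, (T.degree u + (T.degree v - 1)) * T.degree b := by
    refine Finset.sum_congr rfl fun b hb => ?_
    rw [hdeg'u, hdeg'other b (hBnu b (Set.mem_toFinset.1 hb)) (hBnv b (Set.mem_toFinset.1 hb))]
  rw [hrw]
  have hrest : ∀ e ∈ T.edgeFinset \ delF, e ≠ s(v, vminus) →
      Sym2.lift ⟨fun a b => T.degree a * T.degree b, fun _ _ => Nat.mul_comm _ _⟩ e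
        ≤ Sym2.lift ⟨fun a b => G'.degree a * G'.degree b, fun _ _ => Nat.mul_comm _ _⟩ e := by
    intro e he hne
    induction e using Sym2.ind with
    | _ x y =>
      rw [Finset.mem_sdiff, SimpleGraph.mem_edgeFinset, SimpleGraph.mem_edgeSet] at he
      have hxv : x ≠ v := by
        intro hx
        have hy : y ∉ Bs := fun hy => he.2 ((hdelF x y).2 (Or.inl ⟨hx, hy⟩))
        have hadjvy : T.Adj v y := by rw [← hx]; exact he.1
        have hyvm : y = vminus := by
          by_contra hc
          exact hy ((hmemBs y).2 ⟨hadjvy, hc⟩)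
        exact hne (by rw [hyvm, hx])
      have hyv : y ≠ v := by
        intro hy
        have hx : x ∉ Bs := fun hx => he.2 ((hdelF x y).2 (Or.inr ⟨hy, hx⟩))
        have hadjvx : T.Adj v x := by rw [← hy]; exact he.1.symm
        have hxvm : x = vminus := by
          by_contra hc
          exact hx ((hmemBs x).2 ⟨hadjvx, hc⟩)
        exact hne (by rw [hxvm, hy, Sym2.eq_swap])
      simp only [Sym2.lift_mk]
      exact Nat.mul_le_mul (hmono x hxv) (hmono y hyv)
  obtain ⟨E2, hE2⟩ : ∃ k, T.degree v = k + 2 := ⟨T.degree v - 2, by omega⟩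
  obtain ⟨D2, hD2⟩ : ∃ k, T.degree u = k + 2 := ⟨T.degree u - 2, by omega⟩
  have hE1 : T.degree v - 1 = E2 + 1 := by omega
  by_cases hadj : T.Adj u v
  · -- adjacent case : vminus = u
    have hvmu : vminus = u := hadj_case hadj
    have hvmem2 : v ∈ T.neighborFinset u := by
      simp [SimpleGraph.mem_neighborFinset, hadj]
    obtain ⟨w₂, hw₂⟩ : (T.neighborFinset u \ {v}).Nonempty := by
      rw [← Finset.card_pos, Finset.card_sdiff_of_subset (by simpa using hvmem2), Finset.card_singleton,
        SimpleGraph.card_neighborFinset_eq_degree]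
      omega
    rw [Finset.mem_sdiff, Finset.mem_singleton, SimpleGraph.mem_neighborFinset] at hw₂
    have hadj_w2 : T.Adj u w₂ := hw₂.1
    have hw2_ne_v : w₂ ≠ v := hw₂.2
    have hw2_ne_u : w₂ ≠ u := hadj_w2.ne'
    have hKsub : ({s(v, vminus), s(u, w₂)} : Finset (Sym2 V)) ⊆ T.edgeFinset \ delF := by
      intro e he
      rw [Finset.mem_insert, Finset.mem_singleton] at he
      rw [Finset.mem_sdiff, SimpleGraph.mem_edgeFinset]
      rcases he with rfl | rfl
      · refine ⟨(SimpleGraph.mem_edgeSet T).2 hadj_vm.symm, fun h => ?_⟩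
        rcases (hdelF v vminus).1 h with ⟨_, h2⟩ | ⟨h1, _⟩
        · exact hvm_nB h2
        · exact hvm_ne_v h1
      · refine ⟨(SimpleGraph.mem_edgeSet T).2 hadj_w2, fun h => ?_⟩
        rcases (hdelF u w₂).1 h with ⟨h1, _⟩ | ⟨h1, _⟩
        · exact huv h1
        · exact hw2_ne_v h1
    have hnotin : s(v, vminus) ∉ ({s(u, w₂)} : Finset (Sym2 V)) := by
      simp only [Finset.mem_singleton, Sym2.eq_iff]
      push_neg
      constructor
      · intro h; exact absurd h (Ne.symm huv)
      · intro h; exact absurd h (Ne.symm hw2_ne_v)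
    rw [← hdelFdef, ← Finset.sum_sdiff hKsub, ← Finset.sum_sdiff hKsub,
      Finset.sum_insert hnotin, Finset.sum_singleton, Finset.sum_insert hnotin,
      Finset.sum_singleton]
    simp only [Sym2.lift_mk]
    have hA : ∑ e ∈ (T.edgeFinset \ delF) \ {s(v, vminus), s(u, w₂)},
          Sym2.lift ⟨fun a b => T.degree a * T.degree b, fun _ _ => Nat.mul_comm _ _⟩ e
        ≤ ∑ e ∈ (T.edgeFinset \ delF) \ {s(v, vminus), s(u, w₂)},
          Sym2.lift ⟨fun a b => G'.degree a * G'.degree b, fun _ _ => Nat.mul_comm _ _⟩ e := by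
      refine Finset.sum_le_sum fun e he => ?_
      rw [Finset.mem_sdiff] at he
      exact hrest e he.1 (fun h => he.2 (h ▸ Finset.mem_insert_self _ _))
    have hdg1 : T.degree vminus = T.degree u := by rw [hvmu]
    have hdg2 : G'.degree vminus = G'.degree u := by rw [hvmu]
    rw [hdg1, hdg2, hdeg'v, hdeg'u, hdeg'other w₂ hw2_ne_u hw2_ne_v]
    rw [← Finset.mul_sum, ← Finset.mul_sum]
    have hSb : E2 + 1 ≤ ∑ b ∈ Bs.toFinset, T.degree b := by
      have h1 := Finset.card_nsmul_le_sum Bs.toFinset (fun b => T.degree b) 1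
        (fun b hb => (T.degree_pos_iff_exists_adj b).2
          ⟨v, (((hmemBs b).1 (Set.mem_toFinset.1 hb)).1).symm⟩)
      simp only [smul_eq_mul, mul_one] at h1
      rw [hcardBs] at h1
      omega
    have hdw1 : 1 ≤ T.degree w₂ := (T.degree_pos_iff_exists_adj w₂).2 ⟨u, hadj_w2.symm⟩
    rw [hE1, hE2, hD2]
    have hint1 := Nat.mul_le_mul_left (D2 + 1) hSb
    have hint2 := Nat.mul_le_mul_left (E2 + 1) hdw1
    nlinarith [hA, hint1, hint2]
  · -- nonadjacent case
    have hvm_ne_u : vminus ≠ u := fun he => hadj (he ▸ hadj_vm)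
    have hup_ne_v : uplus ≠ v := fun he => hadj (he ▸ hadj_up)
    have hup_ne_u : uplus ≠ u := hadj_up.ne'
    have hupmem : uplus ∈ T.neighborFinset u := by
      simp [SimpleGraph.mem_neighborFinset, hadj_up]
    obtain ⟨w₂, hw₂⟩ : (T.neighborFinset u \ {uplus}).Nonempty := by
      rw [← Finset.card_pos, Finset.card_sdiff_of_subset (by simpa using hupmem), Finset.card_singleton,
        SimpleGraph.card_neighborFinset_eq_degree]
      omega
    rw [Finset.mem_sdiff, Finset.mem_singleton, SimpleGraph.mem_neighborFinset] at hw₂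
    have hadj_w2 : T.Adj u w₂ := hw₂.1
    have hw2_ne_up : w₂ ≠ uplus := hw₂.2
    have hw2_ne_u : w₂ ≠ u := hadj_w2.ne'
    have hw2_ne_v : w₂ ≠ v := fun he => hadj (he ▸ hadj_w2)
    have hKsub : ({s(v, vminus), s(u, uplus), s(u, w₂)} : Finset (Sym2 V)) ⊆
        T.edgeFinset \ delF := by
      intro e he
      rw [Finset.mem_insert, Finset.mem_insert, Finset.mem_singleton] at he
      rw [Finset.mem_sdiff, SimpleGraph.mem_edgeFinset]
      rcases he with rfl | rfl | rfl
      · refine ⟨(SimpleGraph.mem_edgeSet T).2 hadj_vm.symm, fun h => ?_⟩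
        rcases (hdelF v vminus).1 h with ⟨_, h2⟩ | ⟨h1, _⟩
        · exact hvm_nB h2
        · exact hvm_ne_v h1
      · refine ⟨(SimpleGraph.mem_edgeSet T).2 hadj_up, fun h => ?_⟩
        rcases (hdelF u uplus).1 h with ⟨h1, _⟩ | ⟨h1, _⟩
        · exact huv h1
        · exact hup_ne_v h1
      · refine ⟨(SimpleGraph.mem_edgeSet T).2 hadj_w2, fun h => ?_⟩
        rcases (hdelF u w₂).1 h with ⟨h1, _⟩ | ⟨h1, _⟩
        · exact huv h1
        · exact hw2_ne_v h1
    have hnotin1 : s(v, vminus) ∉ ({s(u, uplus), s(u, w₂)} : Finset (Sym2 V)) := by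
      simp only [Finset.mem_insert, Finset.mem_singleton, Sym2.eq_iff]
      push_neg
      refine ⟨⟨fun h => absurd h (Ne.symm huv), fun h => absurd h (Ne.symm hup_ne_v)⟩,
        ⟨fun h => absurd h (Ne.symm huv), fun h => absurd h (Ne.symm hw2_ne_v)⟩⟩
    have hnotin2 : s(u, uplus) ∉ ({s(u, w₂)} : Finset (Sym2 V)) := by
      simp only [Finset.mem_singleton, Sym2.eq_iff]
      push_neg
      constructor
      · intro _; exact fun h => absurd h (Ne.symm hw2_ne_up)
      · intro h; exact absurd h (Ne.symm hw2_ne_u)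
    rw [← hdelFdef, ← Finset.sum_sdiff hKsub, ← Finset.sum_sdiff hKsub,
      Finset.sum_insert hnotin1, Finset.sum_insert hnotin2, Finset.sum_singleton,
      Finset.sum_insert hnotin1, Finset.sum_insert hnotin2, Finset.sum_singleton]
    simp only [Sym2.lift_mk]
    have hA : ∑ e ∈ (T.edgeFinset \ delF) \ {s(v, vminus), s(u, uplus), s(u, w₂)},
          Sym2.lift ⟨fun a b => T.degree a * T.degree b, fun _ _ => Nat.mul_comm _ _⟩ e
        ≤ ∑ e ∈ (T.edgeFinset \ delF) \ {s(v, vminus), s(u, uplus), s(u, w₂)},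
          Sym2.lift ⟨fun a b => G'.degree a * G'.degree b, fun _ _ => Nat.mul_comm _ _⟩ e := by
      refine Finset.sum_le_sum fun e he => ?_
      rw [Finset.mem_sdiff] at he
      exact hrest e he.1 (fun h => he.2 (h ▸ Finset.mem_insert_self _ _))
    have hB : ∑ b ∈ Bs.toFinset, T.degree v * T.degree b
        ≤ ∑ b ∈ Bs.toFinset, (T.degree u + (T.degree v - 1)) * T.degree b :=
      Finset.sum_le_sum fun b _ => Nat.mul_le_mul_right _ (by omega)
    rw [hdeg'v, hdeg'u, hdeg'other vminus hvm_ne_u hvm_ne_v,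
      hdeg'other uplus hup_ne_u hup_ne_v, hdeg'other w₂ hw2_ne_u hw2_ne_v]
    have hdm_le : T.degree vminus ≤ T.degree uplus := halphabeta hadj
    have hdw1 : 1 ≤ T.degree w₂ := (T.degree_pos_iff_exists_adj w₂).2 ⟨u, hadj_w2.symm⟩
    rw [hE1, hE2]
    rw [hE1, hE2] at hB
    have hint1 := Nat.mul_le_mul_left (E2 + 1) hdm_le
    have hint2 := Nat.mul_le_mul_left (E2 + 1) hdw1
    nlinarith [hA, hB, hint1, hint2]
end

section
/- Let T be a finite tree and u, v distinct vertices of T with deg_T(u) = p ≥ 2 and deg_T(v) = t ≥ 2. Let v⁻ be the neighbor of v on the unique path from u to v in T, and let N_T(v) \ {v⁻} be partitioned into a nonempty set B = {b₁,…,b_q} and a set C of size r. Let T̃ be the tree obtained from T by deleting the edges vb₁,…,vb_q and adding the edges ub₁,…,ub_q (the neighbor switch S^B_{v→u}). If p > r + 1, then m(T̃) > m(T). -/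
open SimpleGraph Finset

variable {V : Type*}

lemma mMetric_def' [Fintype V] (G : SimpleGraph V) [DecidableRel G.Adj] :
    mMetric G = ∑ v : V, (G.degree v) ^ 2 := by
  unfold mMetric; congr!

/-- Lemma 2 (neighbor switch increases the m-metric when `p > r + 1`). -/
theorem mMetric_lt_mMetric_switchGraph [Fintype V] [DecidableEq V]
    (T : SimpleGraph V) [DecidableRel T.Adj] (hT : T.IsTree)
    (u v : V) (huv : u ≠ v) (p t r : ℕ)
    (hdegu : T.degree u = p) (hp : 2 ≤ p)
    (hdegv : T.degree v = t) (ht : 2 ≤ t)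
    (P : T.Walk u v) (hP : P.IsPath)
    (vminus : V) (hvminus : vminus = P.getVert (P.length - 1))
    (B C : Finset V) (hdisj : Disjoint B C)
    (hBC : B ∪ C = T.neighborFinset v \ {vminus})
    (hBne : B.Nonempty) (hCr : C.card = r)
    (hpr : r + 1 < p) :
    mMetric T < mMetric (switchGraph T u v ↑B) := by
  classical
  set T' := switchGraph T u v ↑B with hT'def
  have huniq := (isTree_iff_existsUnique_path.mp hT).2
  have hlen : 1 ≤ P.length := by
    rcases Nat.eq_zero_or_pos P.length with h0 | h1
    · exact absurd (SimpleGraph.Walk.eq_of_length_eq_zero h0) huv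
    · exact h1
  have hadjv : T.Adj v vminus := by
    have h := P.adj_getVert_succ (i := P.length - 1) (by omega)
    rw [Nat.sub_add_cancel hlen, P.getVert_length] at h
    rw [hvminus]; exact h.symm
  have hBmem : ∀ b ∈ B, T.Adj v b ∧ b ≠ vminus := by
    intro b hb
    have : b ∈ T.neighborFinset v \ {vminus} := by
      rw [← hBC]; exact Finset.mem_union_left _ hb
    simp only [Finset.mem_sdiff, mem_neighborFinset, Finset.mem_singleton] at this
    exact this
  have hbu : ∀ b ∈ B, b ≠ u := by
    intro b hb hbueq
    obtain ⟨hadj, hbv⟩ := hBmem b hb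
    subst hbueq
    have hQ : (hadj.symm.toWalk).IsPath := (SimpleGraph.Path.singleton hadj.symm).2
    have hPQ := (huniq b v).unique hP hQ
    apply hbv
    rw [hvminus, hPQ]
    simp [SimpleGraph.Adj.toWalk]
  have hbadj : ∀ b ∈ B, ¬ T.Adj u b := by
    intro b hb hadj
    obtain ⟨hvb, hbv⟩ := hBmem b hb
    have hbne : b ≠ v := hvb.ne'
    have hQ : (SimpleGraph.Walk.cons hadj (hvb.symm.toWalk)).IsPath := by
      simp [SimpleGraph.Adj.toWalk, SimpleGraph.Walk.cons_isPath_iff,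
        SimpleGraph.Walk.isPath_def, hbne, huv, Ne.symm (hbu b hb)]
    have hPQ := (huniq u v).unique hP hQ
    apply hbv
    rw [hvminus, hPQ]
    simp [SimpleGraph.Adj.toWalk]
  have huB : u ∉ B := fun h => (hbu u h) rfl
  have hvB : v ∉ B := fun h => ((hBmem v h).1.ne rfl)
  have hmem : ∀ (w x y : V), (∃ b ∈ (↑B : Set V), s(x, y) = s(w, b)) ↔
      ((x = w ∧ y ∈ B) ∨ (y = w ∧ x ∈ B)) := by
    intro w x y
    constructor
    · rintro ⟨b, hb, h⟩
      rw [Sym2.eq_iff] at h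
      rcases h with ⟨rfl, rfl⟩ | ⟨rfl, rfl⟩
      · exact Or.inl ⟨rfl, hb⟩
      · exact Or.inr ⟨rfl, hb⟩
    · rintro (⟨rfl, h⟩ | ⟨rfl, h⟩)
      · exact ⟨y, h, by rw [Sym2.eq_iff]; exact Or.inl ⟨rfl, rfl⟩⟩
      · exact ⟨x, h, by rw [Sym2.eq_iff]; exact Or.inr ⟨rfl, rfl⟩⟩
  have hAdj : ∀ x y, T'.Adj x y ↔
      ((T.Adj x y ∧ ¬((x = v ∧ y ∈ B) ∨ (y = v ∧ x ∈ B))) ∨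
       (((x = u ∧ y ∈ B) ∨ (y = u ∧ x ∈ B)) ∧ x ≠ y)) := by
    intro x y
    rw [hT'def]
    simp only [switchGraph, sup_adj, deleteEdges_adj, fromEdgeSet_adj, Set.mem_setOf_eq]
    rw [hmem v x y, hmem u x y]
  -- neighbor finsets
  have hNu : T'.neighborFinset u = T.neighborFinset u ∪ B := by
    ext y
    rw [mem_neighborFinset, hAdj, Finset.mem_union, mem_neighborFinset]
    constructor
    · rintro (⟨h, -⟩ | ⟨(⟨-, h⟩ | ⟨rfl, h⟩), hne⟩)
      · exact Or.inl h
      · exact Or.inr h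
      · exact absurd h huB
    · rintro (h | h)
      · refine Or.inl ⟨h, ?_⟩
        rintro (⟨rfl, -⟩ | ⟨rfl, hB⟩)
        · exact huv rfl
        · exact huB hB
      · exact Or.inr ⟨Or.inl ⟨rfl, h⟩, fun he => hbu y h he.symm⟩
  have hNv : T'.neighborFinset v = T.neighborFinset v \ B := by
    ext y
    rw [mem_neighborFinset, hAdj, Finset.mem_sdiff, mem_neighborFinset]
    constructor
    · rintro (⟨h, hn⟩ | ⟨(⟨hvu, -⟩ | ⟨rfl, hB⟩), hne⟩)
      · exact ⟨h, fun hy => hn (Or.inl ⟨rfl, hy⟩)⟩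
      · exact absurd hvu.symm huv
      · exact absurd hB hvB
    · rintro ⟨h, hy⟩
      refine Or.inl ⟨h, ?_⟩
      rintro (⟨-, h'⟩ | ⟨rfl, h'⟩)
      · exact hy h'
      · exact hvB h'
  have hNw : ∀ w, w ≠ u → w ≠ v → w ∉ B → T'.neighborFinset w = T.neighborFinset w := by
    intro w hwu hwv hwB
    ext y
    rw [mem_neighborFinset, hAdj, mem_neighborFinset]
    constructor
    · rintro (⟨h, -⟩ | ⟨(⟨rfl, -⟩ | ⟨rfl, hB⟩), -⟩)
      · exact h
      · exact absurd rfl hwu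
      · exact absurd hB hwB
    · intro h
      refine Or.inl ⟨h, ?_⟩
      rintro (⟨rfl, -⟩ | ⟨rfl, hB⟩)
      · exact hwv rfl
      · exact hwB hB
  have hNb : ∀ w ∈ B, T'.neighborFinset w = insert u (T.neighborFinset w \ {v}) := by
    intro w hwB
    have hwu : w ≠ u := hbu w hwB
    have hwv : w ≠ v := fun h => hvB (h ▸ hwB)
    ext y
    rw [mem_neighborFinset, hAdj, Finset.mem_insert, Finset.mem_sdiff,
      mem_neighborFinset, Finset.mem_singleton]
    constructor
    · rintro (⟨h, hn⟩ | ⟨(⟨rfl, -⟩ | ⟨rfl, -⟩), -⟩)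
      · exact Or.inr ⟨h, fun hy => hn (Or.inr ⟨hy, hwB⟩)⟩
      · exact absurd rfl hwu
      · exact Or.inl rfl
    · rintro (rfl | ⟨h, hy⟩)
      · exact Or.inr ⟨Or.inr ⟨rfl, hwB⟩, hwu⟩
      · refine Or.inl ⟨h, ?_⟩
        rintro (⟨rfl, -⟩ | ⟨rfl, -⟩)
        · exact hwv rfl
        · exact hy rfl
  -- degree computations
  set q := B.card with hq
  have hq1 : 1 ≤ q := Finset.card_pos.mpr hBne
  have hBsubN : B ⊆ T.neighborFinset v := by
    intro b hb
    exact mem_neighborFinset _ _ _ |>.mpr (hBmem b hb).1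
  have htqr : t = q + r + 1 := by
    have hsub : ({vminus} : Finset V) ⊆ T.neighborFinset v := by
      simp [mem_neighborFinset, hadjv]
    have h1 : (B ∪ C).card = t - 1 := by
      rw [hBC, Finset.card_sdiff_of_subset hsub]
      simp [hdegv]
    rw [Finset.card_union_of_disjoint hdisj, hCr] at h1
    omega
  have hdeg'u : T'.degree u = p + q := by
    have hd : Disjoint (T.neighborFinset u) B := by
      rw [Finset.disjoint_left]
      intro a ha haB
      exact hbadj a haB ((mem_neighborFinset _ _ _).mp ha)
    show (T'.neighborFinset u).card = p + q
    rw [hNu, Finset.card_union_of_disjoint hd]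
    congr 1
  have hdeg'v : T'.degree v = r + 1 := by
    show (T'.neighborFinset v).card = r + 1
    rw [hNv, Finset.card_sdiff_of_subset hBsubN]
    have : (T.neighborFinset v).card = t := hdegv
    omega
  have hdeg'w : ∀ w, w ≠ u → w ≠ v → T'.degree w = T.degree w := by
    intro w hwu hwv
    by_cases hwB : w ∈ B
    · show (T'.neighborFinset w).card = (T.neighborFinset w).card
      rw [hNb w hwB]
      have huN : u ∉ T.neighborFinset w \ {v} := by
        simp only [Finset.mem_sdiff, mem_neighborFinset, Finset.mem_singleton, not_and]
        intro hadj
        exact absurd hadj.symm (hbadj w hwB)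
      have hvN : v ∈ T.neighborFinset w := by
        rw [mem_neighborFinset]
        exact (hBmem w hwB).1.symm
      rw [Finset.card_insert_of_notMem huN, Finset.card_sdiff_of_subset (by simpa using hvN),
        Finset.card_singleton]
      have : 1 ≤ (T.neighborFinset w).card := Finset.card_pos.mpr ⟨v, hvN⟩
      omega
    · show (T'.neighborFinset w).card = (T.neighborFinset w).card
      rw [hNw w hwu hwv hwB]
  -- sum manipulation
  have split : ∀ (f : V → ℕ), ∑ w, f w = f u + f v + ∑ w ∈ univ \ {u, v}, f w := by
    intro f
    rw [← Finset.sum_sdiff (Finset.subset_univ ({u, v} : Finset V)),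
      Finset.sum_pair huv]
    omega
  rw [mMetric_def' T, mMetric_def' T']
  have e1 := split (fun w => (T.degree w) ^ 2)
  have e2 := split (fun w => (T'.degree w) ^ 2)
  beta_reduce at e1 e2
  rw [e1, e2]
  have hS : ∑ w ∈ univ \ {u, v}, (T'.degree w) ^ 2
      = ∑ w ∈ univ \ {u, v}, (T.degree w) ^ 2 := by
    refine Finset.sum_congr rfl fun w hw => ?_
    simp only [Finset.mem_sdiff, Finset.mem_insert, Finset.mem_singleton] at hw
    rw [hdeg'w w (fun h => hw.2 (Or.inl h)) (fun h => hw.2 (Or.inr h))]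
  rw [hS, hdeg'u, hdeg'v, hdegu, hdegv]
  have : p ^ 2 + t ^ 2 < (p + q) ^ 2 + (r + 1) ^ 2 := by
    subst htqr
    nlinarith [hq1, hpr]
  omega
end

section
/- Let T be a finite tree of order n ≥ 4 with n even and maximum degree Δ(T) ≤ 3. Then s(T) ≤ 6n − 15, and equality holds if and only if T has no vertex of degree 2. -/
open SimpleGraph Finset

variable {V : Type*}

section Aux
set_option linter.unusedSectionVars false
set_option maxHeartbeats 1000000
variable [Fintype V] (T : SimpleGraph V) [DecidableRel T.Adj]

noncomputable def dI (v : V) : ℤ := (T.degree v : ℤ)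
noncomputable def cI (v : V) : ℤ := if 2 ≤ T.degree v then 1 else 0
noncomputable def lI (v : V) : ℤ := if T.degree v = 1 then 1 else 0
noncomputable def tIdx (v : V) : ℤ := if T.degree v = 2 then 1 else 0

noncomputable def eS : Sym2 V → ℤ :=
  Sym2.lift ⟨fun u v => dI T u * dI T v, fun _ _ => mul_comm _ _⟩
noncomputable def eH : Sym2 V → ℤ :=
  Sym2.lift ⟨fun u v => 4 * cI T u * cI T v - (dI T u - 1) * (dI T v - 1), fun _ _ => by ring⟩
noncomputable def eI : Sym2 V → ℤ :=
  Sym2.lift ⟨fun u v => tIdx T u * cI T v + tIdx T v * cI T u, fun _ _ => by ring⟩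
noncomputable def eK : Sym2 V → ℤ :=
  Sym2.lift ⟨fun u v => max (tIdx T u * cI T v) (tIdx T v * cI T u), fun _ _ => max_comm _ _⟩

variable {T}

lemma c_eq {v : V} (h1 : 1 ≤ T.degree v) : cI T v = 1 - lI T v := by
  unfold cI lI
  rcases Nat.lt_or_ge (T.degree v) 2 with h | h
  · have hv : T.degree v = 1 := by omega
    simp [hv]
  · have hv : T.degree v ≠ 1 := by omega
    simp [h, hv]

lemma l_mul_d (v : V) : lI T v * dI T v = lI T v := by
  unfold lI dI
  by_cases h : T.degree v = 1 <;> simp [h]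

lemma two_d_sq {v : V} (h1 : 1 ≤ T.degree v) (h3 : T.degree v ≤ 3) :
    2 * (dI T v * dI T v) = 8 * dI T v - 6 - 2 * tIdx T v := by
  have : T.degree v = 1 ∨ T.degree v = 2 ∨ T.degree v = 3 := by omega
  rcases this with h | h | h <;> simp [dI, tIdx, h] <;> norm_num

lemma t_lin {v : V} (h1 : 1 ≤ T.degree v) (h3 : T.degree v ≤ 3) :
    2 * lI T v + tIdx T v = 3 - dI T v := by
  have : T.degree v = 1 ∨ T.degree v = 2 ∨ T.degree v = 3 := by omega
  rcases this with h | h | h <;> simp [dI, tIdx, lI, h] <;> norm_num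

/-- pointwise edge inequality: h ≥ I + K. -/
lemma edge_pointwise {u v : V} (hu1 : 1 ≤ T.degree u) (hu3 : T.degree u ≤ 3)
    (hv1 : 1 ≤ T.degree v) (hv3 : T.degree v ≤ 3) :
    eI T s(u, v) + eK T s(u, v) ≤ eH T s(u, v) := by
  have hu : T.degree u = 1 ∨ T.degree u = 2 ∨ T.degree u = 3 := by omega
  have hv : T.degree v = 1 ∨ T.degree v = 2 ∨ T.degree v = 3 := by omega
  rcases hu with h | h | h <;> rcases hv with h' | h' | h' <;>
    simp [eI, eK, eH, tIdx, cI, dI, h, h'] <;> norm_num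

lemma eH_zero {u v : V} (hu1 : 1 ≤ T.degree u) (hu3 : T.degree u ≤ 3)
    (hv1 : 1 ≤ T.degree v) (hv3 : T.degree v ≤ 3)
    (hu2 : T.degree u ≠ 2) (hv2 : T.degree v ≠ 2) : eH T s(u, v) = 0 := by
  have hu : T.degree u = 1 ∨ T.degree u = 3 := by omega
  have hv : T.degree v = 1 ∨ T.degree v = 3 := by omega
  rcases hu with h | h <;> rcases hv with h' | h' <;>
    simp [eH, cI, dI, h, h'] <;> norm_num

lemma eK_nonneg (e : Sym2 V) : 0 ≤ eK T e := by
  induction e using Sym2.ind with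
  | _ u v =>
    refine le_trans ?_ (le_max_left _ _)
    unfold tIdx cI
    split_ifs <;> norm_num
lemma myDartSum (f : Sym2 V → ℤ) :
    ∑ d : T.Dart, f d.edge = 2 * ∑ e ∈ T.edgeFinset, f e := by
  classical
  rw [← Finset.sum_fiberwise_of_maps_to (g := SimpleGraph.Dart.edge)
    (fun d _ => SimpleGraph.mem_edgeFinset.2 d.edge_mem) (fun d => f d.edge)]
  rw [Finset.mul_sum]
  refine Finset.sum_congr rfl fun e he => ?_
  have hcard : #{d : T.Dart | d.edge = e} = 2 :=
    T.dart_edge_fiber_card e (SimpleGraph.mem_edgeFinset.1 he)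
  calc ∑ d ∈ {d : T.Dart | d.edge = e}, f d.edge
      = ∑ d ∈ {d : T.Dart | d.edge = e}, f e := by
        refine Finset.sum_congr rfl fun d hd => ?_
        rw [Finset.mem_filter] at hd
        rw [hd.2]
    _ = 2 * f e := by rw [Finset.sum_const, hcard]; ring

lemma myDartSumFst (F : V → V → ℤ) :
    ∑ d : T.Dart, F d.fst d.snd = ∑ v, ∑ u ∈ T.neighborFinset v, F v u := by
  classical
  have h1 : ∑ d : T.Dart, F d.fst d.snd
      = ∑ p ∈ Finset.univ.filter (fun p : V × V => T.Adj p.1 p.2), F p.1 p.2 := by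
    refine Finset.sum_bij' (fun d _ => (d.fst, d.snd))
      (fun p hp => SimpleGraph.Dart.mk p ((Finset.mem_filter.1 hp).2))
      ?_ ?_ ?_ ?_ ?_
    · intro d _; simp [d.adj]
    · intro p hp; simp
    · intro d _; rfl
    · intro p hp; rfl
    · intro d _; rfl
  rw [h1, Finset.sum_filter, Fintype.sum_prod_type]
  refine Finset.sum_congr rfl fun v _ => ?_
  rw [SimpleGraph.neighborFinset_eq_filter, Finset.sum_filter]

/-- swap symmetry of the double neighbor sum -/
lemma mySwapSum (F : V → V → ℤ) :
    ∑ v, ∑ u ∈ T.neighborFinset v, F v u = ∑ v, ∑ u ∈ T.neighborFinset v, F u v := by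
  classical
  simp only [SimpleGraph.neighborFinset_eq_filter, Finset.sum_filter]
  rw [Finset.sum_comm]
  refine Finset.sum_congr rfl fun v _ => Finset.sum_congr rfl fun u _ => ?_
  exact if_congr (T.adj_comm u v) rfl rfl

/-- key combination -/
lemma myEdgeSum (F : V → V → ℤ) (hF : ∀ u v, F u v = F v u) :
    2 * ∑ e ∈ T.edgeFinset, Sym2.lift ⟨F, hF⟩ e = ∑ v, ∑ u ∈ T.neighborFinset v, F v u := by
  rw [← myDartSum, ← myDartSumFst]
  refine Finset.sum_congr rfl fun d _ => ?_
  rfl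

lemma myWalkClosed {S : Set V} (hcl : ∀ a b, a ∈ S → T.Adj a b → b ∈ S)
    {u w : V} (p : T.Walk u w) (hu : u ∈ S) : w ∈ S := by
  induction p with
  | nil => exact hu
  | cons h _ ih => exact ih (hcl _ _ hu h)

lemma myDegreePos (hc : T.Connected) (hn : 2 ≤ Fintype.card V) (v : V) :
    1 ≤ T.degree v := by
  obtain ⟨w, hw⟩ := Fintype.exists_ne_of_one_lt_card (by omega) v
  obtain ⟨p⟩ := hc v w
  cases p with
  | nil => exact absurd rfl hw.symm
  | cons h _ =>
    rw [Nat.one_le_iff_ne_zero, ← Nat.pos_iff_ne_zero, ← SimpleGraph.card_neighborFinset_eq_degree]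
    exact Finset.card_pos.2 ⟨_, (SimpleGraph.mem_neighborFinset T v _).2 h⟩

lemma leaf_nbhd {u v : V} (h : T.Adj u v) (hu : T.degree u = 1) :
    T.neighborFinset u = {v} := by
  have hcard : (T.neighborFinset u).card = 1 := by
    rw [SimpleGraph.card_neighborFinset_eq_degree]; exact hu
  obtain ⟨a, ha⟩ := Finset.card_eq_one.1 hcard
  have hv : v ∈ T.neighborFinset u := (SimpleGraph.mem_neighborFinset T u v).2 h
  rw [ha] at hv ⊢
  rw [Finset.mem_singleton.1 hv]

lemma myNoLeafLeaf (hc : T.Connected) (hn : 3 ≤ Fintype.card V) {u v : V} (h : T.Adj u v)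
    (hu : T.degree u = 1) (hv : T.degree v = 1) : False := by
  classical
  have hcl : ∀ a b, a ∈ ({u, v} : Set V) → T.Adj a b → b ∈ ({u, v} : Set V) := by
    rintro a b (rfl | rfl) hab
    · have : b ∈ T.neighborFinset a := (SimpleGraph.mem_neighborFinset T a b).2 hab
      rw [leaf_nbhd h hu] at this
      right; exact Finset.mem_singleton.1 this
    · have : b ∈ T.neighborFinset a := (SimpleGraph.mem_neighborFinset T a b).2 hab
      rw [leaf_nbhd h.symm hv] at this
      left; exact Finset.mem_singleton.1 this
  have hall : ∀ w : V, w ∈ ({u, v} : Set V) := by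
    intro w
    obtain ⟨p⟩ := hc u w
    exact myWalkClosed hcl p (by left; rfl)
  have : Fintype.card V ≤ 2 := by
    have : (Finset.univ : Finset V) ⊆ {u, v} := by
      intro w _
      have := hall w
      simpa using this
    calc Fintype.card V = (Finset.univ : Finset V).card := rfl
      _ ≤ ({u, v} : Finset V).card := Finset.card_le_card this
      _ ≤ 2 := Finset.card_insert_le _ _ |>.trans (by simp)
  omega

lemma myDeg2Internal (hc : T.Connected) (hn : 4 ≤ Fintype.card V) {v : V}
    (hv : T.degree v = 2) : ∃ u ∈ T.neighborFinset v, 2 ≤ T.degree u := by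
  classical
  by_contra hcon
  push_neg at hcon
  have hleaf : ∀ u ∈ T.neighborFinset v, T.degree u = 1 := by
    intro u hu
    have h1 := myDegreePos hc (by omega) u
    have h2 := hcon u hu
    omega
  have hcard : (T.neighborFinset v).card = 2 := by
    rw [SimpleGraph.card_neighborFinset_eq_degree]; exact hv
  obtain ⟨x, y, hxy, hN⟩ := Finset.card_eq_two.1 hcard
  have hx : x ∈ T.neighborFinset v := by rw [hN]; simp
  have hy : y ∈ T.neighborFinset v := by rw [hN]; simp
  have hax : T.Adj v x := (SimpleGraph.mem_neighborFinset T v x).1 hx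
  have hay : T.Adj v y := (SimpleGraph.mem_neighborFinset T v y).1 hy
  have hcl : ∀ a b, a ∈ ({v, x, y} : Set V) → T.Adj a b → b ∈ ({v, x, y} : Set V) := by
    rintro a b (rfl | rfl | rfl) hab
    · have : b ∈ T.neighborFinset a := (SimpleGraph.mem_neighborFinset T a b).2 hab
      rw [hN] at this
      rcases Finset.mem_insert.1 this with h' | h'
      · right; left; exact h'
      · right; right; exact Finset.mem_singleton.1 h'
    · have : b ∈ T.neighborFinset a := (SimpleGraph.mem_neighborFinset T a b).2 hab
      rw [leaf_nbhd hax.symm (hleaf _ hx)] at this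
      left; exact Finset.mem_singleton.1 this
    · have : b ∈ T.neighborFinset a := (SimpleGraph.mem_neighborFinset T a b).2 hab
      rw [leaf_nbhd hay.symm (hleaf _ hy)] at this
      left; exact Finset.mem_singleton.1 this
  have : Fintype.card V ≤ 3 := by
    have hsub : (Finset.univ : Finset V) ⊆ {v, x, y} := by
      intro w _
      obtain ⟨p⟩ := hc v w
      have := myWalkClosed hcl p (by left; rfl)
      simpa using this
    calc Fintype.card V = (Finset.univ : Finset V).card := rfl
      _ ≤ ({v, x, y} : Finset V).card := Finset.card_le_card hsub
      _ ≤ 3 := by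
        refine (Finset.card_insert_le _ _).trans (Nat.succ_le_succ ?_)
        refine (Finset.card_insert_le _ _).trans (Nat.succ_le_succ ?_)
        simp
  omega

lemma main_identity (hT : T.IsTree) (hn : 4 ≤ Fintype.card V)
    (hdeg : ∀ v : V, T.degree v ≤ 3) :
    2 * (∑ e ∈ T.edgeFinset, eS T e) + 2 * (∑ e ∈ T.edgeFinset, eH T e)
      = 12 * (Fintype.card V : ℤ) - 30 + 2 * ∑ v, tIdx T v := by
  classical
  have hc := hT.isConnected
  have hd1 : ∀ v : V, 1 ≤ T.degree v := myDegreePos hc (by omega)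
  have hSD : ∑ v, dI T v = 2 * (Fintype.card V : ℤ) - 2 := by
    have h1 := T.sum_degrees_eq_twice_card_edges
    have h2 := hT.card_edgeFinset
    have h3 : ∑ v, dI T v = ((∑ v, T.degree v : ℕ) : ℤ) := by
      rw [Nat.cast_sum]; rfl
    rw [h3, h1]
    omega
  have h2SH : 2 * (∑ e ∈ T.edgeFinset, eS T e) + 2 * (∑ e ∈ T.edgeFinset, eH T e)
      = ∑ v, ∑ u ∈ T.neighborFinset v,
          (dI T v + dI T u + 3 - 4 * lI T v - 4 * lI T u) := by
    unfold eS eH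
    rw [myEdgeSum (fun u v => dI T u * dI T v) (fun _ _ => mul_comm _ _),
      myEdgeSum (fun u v => 4 * cI T u * cI T v - (dI T u - 1) * (dI T v - 1))
        (fun _ _ => by ring)]
    rw [← Finset.sum_add_distrib]
    refine Finset.sum_congr rfl fun v _ => ?_
    rw [← Finset.sum_add_distrib]
    refine Finset.sum_congr rfl fun u hu => ?_
    have hadj : T.Adj v u := (SimpleGraph.mem_neighborFinset T v u).1 hu
    have hll : lI T v * lI T u = 0 := by
      unfold lI
      by_cases h : T.degree v = 1
      · by_cases h' : T.degree u = 1
        · exact absurd (myNoLeafLeaf hc (by omega) hadj h h') (fun f => f)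
        · simp [h']
      · simp [h]
    rw [c_eq (hd1 v), c_eq (hd1 u)]
    linear_combination 4 * hll
  rw [h2SH]
  have e1 : ∑ v, ∑ _u ∈ T.neighborFinset v, dI T v = ∑ v, dI T v * dI T v := by
    refine Finset.sum_congr rfl fun v _ => ?_
    rw [Finset.sum_const, SimpleGraph.card_neighborFinset_eq_degree, nsmul_eq_mul]
    rfl
  have e2 : ∑ v, ∑ u ∈ T.neighborFinset v, dI T u = ∑ v, dI T v * dI T v := by
    rw [mySwapSum (fun v u => dI T u)]; exact e1
  have e3 : ∑ v, ∑ _u ∈ T.neighborFinset v, (3 : ℤ) = 3 * ∑ v, dI T v := by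
    rw [Finset.mul_sum]
    refine Finset.sum_congr rfl fun v _ => ?_
    rw [Finset.sum_const, SimpleGraph.card_neighborFinset_eq_degree, nsmul_eq_mul]
    unfold dI; ring
  have e4 : ∑ v, ∑ _u ∈ T.neighborFinset v, lI T v = ∑ v, lI T v := by
    refine Finset.sum_congr rfl fun v _ => ?_
    rw [Finset.sum_const, SimpleGraph.card_neighborFinset_eq_degree, nsmul_eq_mul,
      mul_comm]
    exact l_mul_d v
  have e5 : ∑ v, ∑ u ∈ T.neighborFinset v, lI T u = ∑ v, lI T v := by
    rw [mySwapSum (fun v u => lI T u)]; exact e4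
  have hsplit : ∑ v, ∑ u ∈ T.neighborFinset v,
      (dI T v + dI T u + 3 - 4 * lI T v - 4 * lI T u)
      = (∑ v, ∑ _u ∈ T.neighborFinset v, dI T v)
        + (∑ v, ∑ u ∈ T.neighborFinset v, dI T u)
        + (∑ v, ∑ _u ∈ T.neighborFinset v, (3 : ℤ))
        - 4 * (∑ v, ∑ _u ∈ T.neighborFinset v, lI T v)
        - 4 * (∑ v, ∑ u ∈ T.neighborFinset v, lI T u) := by
    simp only [Finset.sum_add_distrib, Finset.sum_sub_distrib, ← Finset.mul_sum]
  rw [hsplit, e1, e2, e3, e4, e5]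
  have hM : ∑ v, 2 * (dI T v * dI T v) = ∑ v, (8 * dI T v - 6 - 2 * tIdx T v) :=
    Finset.sum_congr rfl fun v _ => two_d_sq (hd1 v) (hdeg v)
  have hL : ∑ v, (2 * lI T v + tIdx T v) = ∑ v, (3 - dI T v) :=
    Finset.sum_congr rfl fun v _ => t_lin (hd1 v) (hdeg v)
  simp only [Finset.sum_add_distrib, Finset.sum_sub_distrib, ← Finset.mul_sum,
    Finset.sum_const, Finset.card_univ, nsmul_eq_mul, mul_one] at hM hL
  linarith [hSD, hM, hL]

lemma sumI_ge (hc : T.Connected) (hn : 4 ≤ Fintype.card V) :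
    2 * ∑ v, tIdx T v ≤ 2 * ∑ e ∈ T.edgeFinset, eI T e := by
  have h2I : 2 * ∑ e ∈ T.edgeFinset, eI T e
      = 2 * ∑ v, tIdx T v * ∑ u ∈ T.neighborFinset v, cI T u := by
    unfold eI
    rw [myEdgeSum (fun u v => tIdx T u * cI T v + tIdx T v * cI T u) (fun _ _ => by ring)]
    have hsw : ∑ v, ∑ u ∈ T.neighborFinset v, tIdx T u * cI T v
        = ∑ v, ∑ u ∈ T.neighborFinset v, tIdx T v * cI T u :=
      mySwapSum (fun v u => tIdx T u * cI T v)
    simp only [Finset.sum_add_distrib]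
    rw [hsw, ← two_mul]
    have hinner : ∑ v, ∑ u ∈ T.neighborFinset v, tIdx T v * cI T u
        = ∑ v, tIdx T v * ∑ u ∈ T.neighborFinset v, cI T u :=
      Finset.sum_congr rfl fun v _ => (Finset.mul_sum _ _ _).symm
    rw [hinner]
  rw [h2I]
  have key : ∀ v : V, tIdx T v ≤ tIdx T v * ∑ u ∈ T.neighborFinset v, cI T u := by
    intro v
    by_cases hv : T.degree v = 2
    · have h1 : (1 : ℤ) ≤ ∑ u ∈ T.neighborFinset v, cI T u := by
        obtain ⟨u0, hu0, hu0d⟩ := myDeg2Internal hc hn hv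
        have h2 : cI T u0 = 1 := by unfold cI; simp [hu0d]
        calc (1 : ℤ) = cI T u0 := h2.symm
          _ ≤ ∑ u ∈ T.neighborFinset v, cI T u := by
            refine Finset.single_le_sum (fun u _ => ?_) hu0
            unfold cI; split_ifs <;> norm_num
      have ht : tIdx T v = 1 := by unfold tIdx; simp [hv]
      rw [ht]; linarith
    · have ht : tIdx T v = 0 := by unfold tIdx; simp [hv]
      rw [ht]; simp
  have := Finset.sum_le_sum (fun v (_ : v ∈ Finset.univ) => key v)
  linarith

lemma sumH_ge (hc : T.Connected) (hn : 4 ≤ Fintype.card V)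
    (hdeg : ∀ v : V, T.degree v ≤ 3) :
    (∑ e ∈ T.edgeFinset, eI T e) + (∑ e ∈ T.edgeFinset, eK T e)
      ≤ ∑ e ∈ T.edgeFinset, eH T e := by
  have hd1 : ∀ v : V, 1 ≤ T.degree v := myDegreePos hc (by omega)
  rw [← Finset.sum_add_distrib]
  refine Finset.sum_le_sum fun e he => ?_
  revert he
  induction e using Sym2.ind with
  | _ u v =>
    intro _
    exact edge_pointwise (hd1 u) (hdeg u) (hd1 v) (hdeg v)

lemma sumK_nonneg : 0 ≤ ∑ e ∈ T.edgeFinset, eK T e :=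
  Finset.sum_nonneg fun e _ => eK_nonneg e

lemma sumK_one (hc : T.Connected) (hn : 4 ≤ Fintype.card V) {v : V}
    (hv : T.degree v = 2) : 1 ≤ ∑ e ∈ T.edgeFinset, eK T e := by
  obtain ⟨u0, hu0, hu0d⟩ := myDeg2Internal hc hn hv
  have hadj : T.Adj v u0 := (SimpleGraph.mem_neighborFinset T v u0).1 hu0
  have hmem : s(v, u0) ∈ T.edgeFinset := SimpleGraph.mem_edgeFinset.2 hadj
  have h1 : (1 : ℤ) ≤ eK T s(v, u0) := by
    refine le_trans ?_ (le_max_left (tIdx T v * cI T u0) (tIdx T u0 * cI T v))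
    unfold tIdx cI
    simp [hv, hu0d]
  exact h1.trans (Finset.single_le_sum (fun e _ => eK_nonneg e) hmem)

lemma sumH_zero (hc : T.Connected) (hn : 4 ≤ Fintype.card V)
    (hdeg : ∀ v : V, T.degree v ≤ 3) (h2 : ∀ v : V, T.degree v ≠ 2) :
    ∑ e ∈ T.edgeFinset, eH T e = 0 := by
  have hd1 : ∀ v : V, 1 ≤ T.degree v := myDegreePos hc (by omega)
  refine Finset.sum_eq_zero fun e he => ?_
  revert he
  induction e using Sym2.ind with
  | _ u v =>
    intro _
    exact eH_zero (hd1 u) (hdeg u) (hd1 v) (hdeg v) (h2 u) (h2 v)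

end Aux

set_option maxHeartbeats 1000000 in
/-- Claim: for a tree `T` of even order `n ≥ 4` with maximum degree at most 3,
`s(T) ≤ 6n − 15`, with equality iff `T` has no vertex of degree 2. -/
theorem sMetric_le_of_maxDegree_le_three [Fintype V]
    (T : SimpleGraph V) [DecidableRel T.Adj] (hT : T.IsTree)
    (hn : 4 ≤ Fintype.card V) (heven : Even (Fintype.card V))
    (hdeg : ∀ v : V, T.degree v ≤ 3) :
    (sMetric T : ℤ) ≤ 6 * Fintype.card V - 15 ∧
      ((sMetric T : ℤ) = 6 * Fintype.card V - 15 ↔ ∀ v : V, T.degree v ≠ 2) := by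
  classical
  have hc := hT.isConnected
  have hcast : (sMetric T : ℤ) = ∑ e ∈ T.edgeFinset, eS T e := by
    have h0 : sMetric T = ∑ e ∈ T.edgeFinset,
        Sym2.lift ⟨fun u v => T.degree u * T.degree v, fun _ _ => Nat.mul_comm _ _⟩ e := by
      unfold sMetric
      congr!
    rw [h0, Nat.cast_sum]
    refine Finset.sum_congr rfl fun e _ => ?_
    induction e using Sym2.ind with
    | _ u v =>
      unfold eS dI
      simp only [Sym2.lift_mk]
      push_cast
      ring
  have hid := main_identity hT hn hdeg
  have hIle := sumI_ge hc hn
  have hHge := sumH_ge hc hn hdeg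
  have hK0 := sumK_nonneg (T := T)
  refine ⟨?_, ?_, ?_⟩
  · rw [hcast]; linarith
  · intro heq v hv2
    have hK1 := sumK_one hc hn hv2
    rw [hcast] at heq
    linarith
  · intro hno
    have hH0 := sumH_zero hc hn hdeg hno
    have hN2 : ∑ v, tIdx T v = 0 := Finset.sum_eq_zero fun v _ => by
      unfold tIdx; simp [hno v]
    rw [hcast]
    linarith
end

section
/- Let G be a finite connected cubic (3-regular) simple graph on n vertices with n ≥ 4 even. Then τ₂(G) ≤ 6n − 15, and equality τ₂(G) = 6n − 15 holds if and only if G has a spanning tree with no vertex of degree 2. -/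
open SimpleGraph Finset

variable {V : Type*}

/-!
Let `T` be a spanning tree of a cubic graph on `n ≥ 4` vertices, so its degrees lie in
`{1, 2, 3}`. Since `T` has `n - 1` edges, summing `15 - 18 / deg v - deg v * deg u` over the
darts `(v, u)` of `T` gives `12 n - 30 - 2 s(T)`. The two darts of an edge contribute `0` in
total unless an endpoint has degree 2, and otherwise their contribution can be handed to the
degree-2 endpoints: such a vertex receives `-1` from a leaf neighbour and `d` from a neighbour
of degree `d ≥ 2`. As `n ≥ 4`, no degree-2 vertex has two leaf neighbours, so each one receives
a positive amount. Hence `2 s(T) ≤ 12 n - 30`, with equality exactly when `T` has no vertex of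
degree 2.
-/

def defectWeight (d : ℕ) : ℤ := if d = 1 then -1 else d

-- `18 / x` is exact division for the degrees `x ∈ {1, 2, 3}` of the trees below.
def dartCharge (x y : ℕ) : ℤ := 15 - 18 / x - x * y

theorem dartCharge_add_dartCharge {x y : ℕ} (hx : x ∈ Icc 1 3) (hy : y ∈ Icc 1 3)
    (hxy : x ≠ 1 ∨ y ≠ 1) :
    dartCharge x y + dartCharge y x =
      (if x = 2 then defectWeight y else 0) + (if y = 2 then defectWeight x else 0) := by
  obtain ⟨hx1, hx3⟩ := mem_Icc.1 hx
  obtain ⟨hy1, hy3⟩ := mem_Icc.1 hy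
  interval_cases x <;> interval_cases y <;> simp_all [dartCharge, defectWeight]

namespace SimpleGraph

section NeighborSums

variable (G : SimpleGraph V) [Fintype V] [DecidableRel G.Adj] {M : Type*} [AddCommMonoid M]

theorem sum_sum_neighborFinset_comm (f : V → V → M) :
    ∑ v, ∑ u ∈ G.neighborFinset v, f v u = ∑ v, ∑ u ∈ G.neighborFinset v, f u v := by
  simp only [neighborFinset_eq_filter, sum_filter]
  rw [sum_comm]
  simp only [adj_comm]

theorem sum_sum_neighborFinset_eq_of_add_swap_eq [IsAddTorsionFree M] {f g : V → V → M}
    (hfg : ∀ u v, G.Adj u v → f u v + f v u = g u v + g v u) :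
    ∑ v, ∑ u ∈ G.neighborFinset v, f v u = ∑ v, ∑ u ∈ G.neighborFinset v, g v u := by
  have key : ∀ h : V → V → M, 2 • ∑ v, ∑ u ∈ G.neighborFinset v, h v u =
      ∑ v, ∑ u ∈ G.neighborFinset v, (h v u + h u v) := fun h => by
    rw [two_nsmul]
    nth_rw 2 [sum_sum_neighborFinset_comm]
    simp only [sum_add_distrib]
  refine IsAddTorsionFree.nsmul_right_injective two_ne_zero ?_
  simp only [key]
  exact sum_congr rfl fun v _ => sum_congr rfl fun u hu => hfg v u ((G.mem_neighborFinset v u).1 hu)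

theorem sum_sum_neighborFinset_sym2Mk (f : Sym2 V → M) :
    ∑ v, ∑ u ∈ G.neighborFinset v, f s(v, u) = 2 • ∑ e ∈ G.edgeFinset, f e := by
  classical
  have hdart : ∑ v, ∑ u ∈ G.neighborFinset v, f s(v, u) = ∑ d : G.Dart, f d.edge := by
    rw [← sum_fiberwise_of_maps_to (g := fun d : G.Dart => d.fst) (t := univ)
      fun _ _ => mem_univ _]
    refine sum_congr rfl fun v _ => ?_
    rw [G.dart_fst_fiber v, sum_image fun _ _ _ _ h => G.dartOfNeighborSet_injective v h,
      neighborFinset_def, ← sum_set_coe (f := fun u => f s(v, u))]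
    rfl
  rw [hdart, ← sum_fiberwise_of_maps_to (g := Dart.edge) (t := G.edgeFinset)
    fun d _ => G.mem_edgeFinset.2 d.edge_mem, smul_sum]
  refine sum_congr rfl fun e he => ?_
  rw [sum_congr rfl fun d hd => congrArg f (mem_filter.1 hd).2, sum_const,
    G.dart_edge_fiber_card e (G.mem_edgeFinset.1 he)]

end NeighborSums

theorem two_mul_sMetric [Fintype V] (G : SimpleGraph V) [DecidableRel G.Adj] :
    2 * sMetric G = ∑ v, ∑ u ∈ G.neighborFinset v, G.degree v * G.degree u := by
  have h := G.sum_sum_neighborFinset_sym2Mk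
    (Sym2.lift ⟨fun u v => G.degree u * G.degree v, fun _ _ => Nat.mul_comm _ _⟩)
  simp only [Sym2.lift_mk] at h
  rw [h, smul_eq_mul, sMetric]
  congr!

theorem Preconnected.eq_univ_of_forall_adj_mem [Fintype V] {G : SimpleGraph V}
    (hG : G.Preconnected) {s : Finset V} {a : V} (ha : a ∈ s)
    (hs : ∀ x ∈ s, ∀ y, G.Adj x y → y ∈ s) : s = univ := by
  refine eq_univ_of_forall fun w => ?_
  by_contra hw
  obtain ⟨d, -, hd, hd'⟩ := (hG a w).some.exists_boundary_dart (s : Set V) ha hw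
  exact hd' (hs _ hd _ d.adj)

theorem Preconnected.exists_adj_degree_ne_one [Fintype V] {G : SimpleGraph V} [DecidableRel G.Adj]
    (hG : G.Preconnected) {v : V} (hv : G.degree v + 1 < Fintype.card V) :
    ∃ u, G.Adj v u ∧ G.degree u ≠ 1 := by
  classical
  by_contra! hleaves
  have hstar : insert v (G.neighborFinset v) = univ := by
    refine hG.eq_univ_of_forall_adj_mem (mem_insert_self v _) fun x hx y hxy => ?_
    rcases mem_insert.1 hx with rfl | hx
    · exact mem_insert_of_mem ((G.mem_neighborFinset x y).2 hxy)
    · have hxv := ((G.mem_neighborFinset v x).1 hx).symm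
      obtain ⟨w, -, hw⟩ := degree_eq_one_iff_existsUnique_adj.1 (hleaves x hxv.symm)
      rw [hw y hxy, ← hw v hxv]
      exact mem_insert_self v _
  have := card_insert_le v (G.neighborFinset v)
  rw [hstar, card_univ, card_neighborFinset_eq_degree] at this
  omega

theorem Preconnected.degree_ne_one_of_adj [Fintype V] {G : SimpleGraph V} [DecidableRel G.Adj]
    (hG : G.Preconnected) (hcard : 3 ≤ Fintype.card V) {u v : V} (huv : G.Adj u v)
    (hu : G.degree u = 1) : G.degree v ≠ 1 := by
  obtain ⟨w, huw, hw⟩ := hG.exists_adj_degree_ne_one (v := u) (by omega)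
  obtain ⟨x, -, hx⟩ := degree_eq_one_iff_existsUnique_adj.1 hu
  rwa [hx v huv, ← hx w huw]

theorem Preconnected.sum_defectWeight_pos [Fintype V] {G : SimpleGraph V} [DecidableRel G.Adj]
    (hG : G.Preconnected) (hcard : 4 ≤ Fintype.card V) {v : V} (hv : G.degree v = 2) :
    0 < ∑ u ∈ G.neighborFinset v, defectWeight (G.degree u) := by
  classical
  have : Nontrivial V := Fintype.one_lt_card_iff_nontrivial.1 (by omega)
  obtain ⟨c, hvc, hc⟩ := hG.exists_adj_degree_ne_one (v := v) (by omega)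
  obtain ⟨a, b, hab, hnbr⟩ := card_eq_two.1 ((G.card_neighborFinset_eq_degree v).trans hv)
  have hweight : ∀ u, -1 ≤ defectWeight (G.degree u) := fun u => by
    unfold defectWeight; split_ifs <;> omega
  have hcweight : 2 ≤ defectWeight (G.degree c) := by
    have := hG.degree_pos_of_nontrivial c
    unfold defectWeight; split_ifs <;> omega
  have hcmem : c ∈ ({a, b} : Finset V) := hnbr ▸ (G.mem_neighborFinset v c).2 hvc
  rw [hnbr, sum_pair hab]
  rcases mem_insert.1 hcmem with rfl | hcb
  · linarith [hweight b]
  · rw [mem_singleton.1 hcb] at hcweight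
    linarith [hweight a]

section Trees

variable [Fintype V] {T : SimpleGraph V} [DecidableRel T.Adj]

theorem IsTree.degree_mem_Icc (hT : T.IsTree) (hdeg : ∀ v, T.degree v ≤ 3)
    (hcard : 2 ≤ Fintype.card V) (v : V) : T.degree v ∈ Icc 1 3 :=
  have : Nontrivial V := Fintype.one_lt_card_iff_nontrivial.1 hcard
  mem_Icc.2 ⟨hT.connected.preconnected.degree_pos_of_nontrivial v, hdeg v⟩

theorem IsTree.sum_sum_dartCharge (hT : T.IsTree) (hdeg : ∀ v, T.degree v ≤ 3)
    (hcard : 2 ≤ Fintype.card V) :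
    ∑ v, ∑ u ∈ T.neighborFinset v, dartCharge (T.degree v) (T.degree u) =
      12 * Fintype.card V - 30 - 2 * sMetric T := by
  have hsplit : ∀ v, ∑ u ∈ T.neighborFinset v, dartCharge (T.degree v) (T.degree u) =
      15 * T.degree v - 18 - ∑ u ∈ T.neighborFinset v, (T.degree v * T.degree u : ℤ) := by
    intro v
    have h18 : (T.degree v : ℤ) * (18 / T.degree v) = 18 := by
      obtain ⟨h1, h3⟩ := mem_Icc.1 (hT.degree_mem_Icc hdeg hcard v)
      interval_cases T.degree v <;> rfl
    simp only [dartCharge, sum_sub_distrib, sum_const, card_neighborFinset_eq_degree,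
      nsmul_eq_mul]
    linear_combination -h18
  have hedges : (∑ v, T.degree v : ℤ) = 2 * Fintype.card V - 2 := by
    have := hT.card_edgeFinset
    rw [← Nat.cast_sum, T.sum_degrees_eq_twice_card_edges]
    omega
  have hsMetric : (2 * sMetric T : ℤ) =
      ∑ v, (T.degree v : ℤ) * ∑ u ∈ T.neighborFinset v, (T.degree u : ℤ) := by
    simp only [mul_sum]
    exact_mod_cast two_mul_sMetric T
  simp only [hsplit, sum_sub_distrib, ← mul_sum, sum_const, card_univ, nsmul_eq_mul]
  linarith

theorem IsTree.two_mul_sMetric_eq (hT : T.IsTree) (hdeg : ∀ v, T.degree v ≤ 3)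
    (hcard : 3 ≤ Fintype.card V) :
    (2 * sMetric T : ℤ) = 12 * Fintype.card V - 30 -
      ∑ v with T.degree v = 2, ∑ u ∈ T.neighborFinset v, defectWeight (T.degree u) := by
  have hbalance : ∀ u v, T.Adj u v →
      dartCharge (T.degree u) (T.degree v) + dartCharge (T.degree v) (T.degree u) =
      (if T.degree u = 2 then defectWeight (T.degree v) else 0) +
        (if T.degree v = 2 then defectWeight (T.degree u) else 0) := fun u v huv =>
    dartCharge_add_dartCharge (hT.degree_mem_Icc hdeg (by omega) u)
      (hT.degree_mem_Icc hdeg (by omega) v)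
      (or_iff_not_imp_left.2 fun hu =>
        hT.connected.preconnected.degree_ne_one_of_adj hcard huv (not_not.1 hu))
  have hdefect :
      ∑ v with T.degree v = 2, ∑ u ∈ T.neighborFinset v, defectWeight (T.degree u) =
      ∑ v, ∑ u ∈ T.neighborFinset v,
        (if T.degree v = 2 then defectWeight (T.degree u) else 0) := by
    rw [sum_filter]
    refine sum_congr rfl fun v _ => ?_
    split_ifs <;> simp
  rw [hdefect, ← T.sum_sum_neighborFinset_eq_of_add_swap_eq hbalance,
    hT.sum_sum_dartCharge hdeg (by omega)]
  ring

theorem IsTree.sMetric_le_and_eq_iff (hT : T.IsTree) (hdeg : ∀ v, T.degree v ≤ 3)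
    (hcard : 4 ≤ Fintype.card V) :
    sMetric T ≤ 6 * Fintype.card V - 15 ∧
      (sMetric T = 6 * Fintype.card V - 15 ↔ ∀ v, T.degree v ≠ 2) := by
  have hsMetric := hT.two_mul_sMetric_eq hdeg (by omega)
  set D := ∑ v with T.degree v = 2, ∑ u ∈ T.neighborFinset v, defectWeight (T.degree u)
  have hD : 0 ≤ D ∧ (D = 0 ↔ ∀ v, T.degree v ≠ 2) := by
    by_cases h : ∃ v, T.degree v = 2
    · obtain ⟨v, hv⟩ := h
      have : 0 < D := sum_pos (fun w hw => hT.connected.preconnected.sum_defectWeight_pos hcard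
        (mem_filter.1 hw).2) ⟨v, mem_filter.2 ⟨mem_univ v, hv⟩⟩
      exact ⟨this.le, by simpa [this.ne'] using ⟨v, hv⟩⟩
    · push Not at h
      have : D = 0 := sum_eq_zero fun w hw => absurd (mem_filter.1 hw).2 (h w)
      exact ⟨this.ge, by simpa [this] using h⟩
  constructor
  · omega
  · rw [← hD.2]
    omega

end Trees

end SimpleGraph

section SpanningTrees

variable [Fintype V] {G T : SimpleGraph V}

theorem finite_setOf_sMetric_spanningTree :
    {k | ∃ T : SimpleGraph V, T ≤ G ∧ T.IsTree ∧ sMetric T = k}.Finite :=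
  (Set.finite_range sMetric).subset fun _ ⟨T, _, _, hk⟩ => ⟨T, hk⟩

theorem sMetric_le_tau2 (hle : T ≤ G) (hT : T.IsTree) : sMetric T ≤ tau2 G :=
  le_csSup finite_setOf_sMetric_spanningTree.bddAbove ⟨T, hle, hT, rfl⟩

theorem tau2_le {b : ℕ} (h : ∀ T ≤ G, T.IsTree → sMetric T ≤ b) : tau2 G ≤ b :=
  csSup_le' fun _ ⟨T, hle, hT, hk⟩ => hk ▸ h T hle hT

theorem exists_sMetric_eq_tau2 (h : tau2 G ≠ 0) :
    ∃ T ≤ G, T.IsTree ∧ sMetric T = tau2 G := by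
  refine Set.Nonempty.csSup_mem ?_ finite_setOf_sMetric_spanningTree
  by_contra hempty
  exact h (by rw [tau2, Set.not_nonempty_iff_eq_empty.1 hempty, csSup_empty]; rfl)

end SpanningTrees

theorem tau2_le_of_cubic_general [Fintype V]
    (G : SimpleGraph V) [DecidableRel G.Adj]
    (hcubic : ∀ v : V, G.degree v = 3)
    (hn : 4 ≤ Fintype.card V) :
    (tau2 G : ℤ) ≤ 6 * Fintype.card V - 15 ∧
      ((tau2 G : ℤ) = 6 * Fintype.card V - 15 ↔
        ∃ T : SimpleGraph V, T ≤ G ∧ T.IsTree ∧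
          ∀ v : V, letI := Classical.decRel T.Adj; T.degree v ≠ 2) := by
  have htree : ∀ T ≤ G, T.IsTree → sMetric T ≤ 6 * Fintype.card V - 15 ∧
      (sMetric T = 6 * Fintype.card V - 15 ↔
        ∀ v : V, letI := Classical.decRel T.Adj; T.degree v ≠ 2) := fun T hle hT =>
    letI := Classical.decRel T.Adj
    hT.sMetric_le_and_eq_iff (fun v => (degree_le_of_le hle).trans (hcubic v).le) hn
  have hle : tau2 G ≤ 6 * Fintype.card V - 15 := tau2_le fun T hle hT => (htree T hle hT).1
  refine ⟨by omega, fun h => ?_, fun ⟨T, hTG, hT, hno⟩ => ?_⟩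
  · obtain ⟨T, hTG, hT, hs⟩ := exists_sMetric_eq_tau2 (G := G) (by omega)
    exact ⟨T, hTG, hT, (htree T hTG hT).2.1 (by omega)⟩
  · have := sMetric_le_tau2 hTG hT
    have := (htree T hTG hT).2.2 hno
    omega

/-- For a connected cubic graph `G` on an even number `n ≥ 4` of vertices,
`τ₂(G) ≤ 6n − 15`, with equality iff `G` has a spanning tree with no vertex of degree 2. -/
theorem tau2_le_of_cubic [Fintype V]
    (G : SimpleGraph V) [DecidableRel G.Adj] (hG : G.Connected)
    (hcubic : ∀ v : V, G.degree v = 3)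
    (hn : 4 ≤ Fintype.card V) (heven : Even (Fintype.card V)) :
    (tau2 G : ℤ) ≤ 6 * Fintype.card V - 15 ∧
      ((tau2 G : ℤ) = 6 * Fintype.card V - 15 ↔
        ∃ T : SimpleGraph V, T ≤ G ∧ T.IsTree ∧
          ∀ v : V, letI := Classical.decRel T.Adj; T.degree v ≠ 2) :=
  tau2_le_of_cubic_general G hcubic hn
end
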